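/- arXiv:2507.23105 — 7 statements merged into one kernel-verified Lean document; each statement's English description precedes it below -/
import Mathlib

section
/- Let a ∈ [0,1] and let x, y > 0 be real numbers satisfying |a·x − y| ≤ 1 + a. Then |(x + y)·√(a² + 1)/(a + 1) − √(x² + y²)| ≤ 1. -/
/-!
Write `S = (x + y)·√(a² + 1)/(a + 1)` and `t = √(x² + y²)`. A direct computation gives
`(a + 1)² (S² - t²) = -2 (a x - y)(x - a y)`, so with `|a x - y| ≤ a + 1` we get
`|S² - t²| ≤ 2 |x - a y| / (a + 1)`. By Cauchy–Schwarz `|x - a y| ≤ √(a² + 1) · t`, and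
both `S` and `t` dominate `√(a² + 1) · t / (a + 1)` (as `t ≤ x + y` and `√(a² + 1) ≤ a + 1`),
hence `|S² - t²| ≤ S + t`, i.e. `|S - t| ≤ 1`.
-/

lemma Real.sqrt_sq_add_sq_le_add {x y : ℝ} (hx : 0 ≤ x) (hy : 0 ≤ y) :
    √(x ^ 2 + y ^ 2) ≤ x + y :=
  Real.sqrt_le_iff.mpr ⟨by positivity, by nlinarith [mul_nonneg hx hy]⟩

lemma abs_sub_mul_le_sqrt_mul_sqrt (a x y : ℝ) :
    |x - a * y| ≤ √(a ^ 2 + 1) * √(x ^ 2 + y ^ 2) := by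
  rw [← Real.sqrt_mul (by positivity)]
  exact Real.abs_le_sqrt (by nlinarith [sq_nonneg (a * x + y)])

lemma abs_sub_le_of_abs_sq_sub_sq_le {S t ε : ℝ} (hpos : 0 < S + t)
    (h : |S ^ 2 - t ^ 2| ≤ (S + t) * ε) : |S - t| ≤ ε := by
  rw [sq_sub_sq, abs_mul, abs_of_pos hpos] at h
  exact le_of_mul_le_mul_left h hpos

lemma sq_add_mul_sqrt_div_sub_sq_sqrt {a : ℝ} (x y : ℝ) (ha : a + 1 ≠ 0) :
    ((x + y) * (√(a ^ 2 + 1) / (a + 1))) ^ 2 - √(x ^ 2 + y ^ 2) ^ 2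
      = -2 * (a * x - y) * (x - a * y) / (a + 1) ^ 2 := by
  rw [mul_pow, div_pow, Real.sq_sqrt (by positivity), Real.sq_sqrt (by positivity)]
  field_simp
  ring

/-- For `a ∈ [0,1]` and reals `x, y > 0` with `|a*x - y| ≤ 1 + a`,
`|(x + y) * (√(a² + 1) / (a + 1)) - √(x² + y²)| ≤ 1`. -/
theorem stmt3 (a x y : ℝ) (ha : a ∈ Set.Icc (0 : ℝ) 1) (hx : 0 < x) (hy : 0 < y)
    (h : |a * x - y| ≤ 1 + a) :
    |(x + y) * (Real.sqrt (a ^ 2 + 1) / (a + 1)) - Real.sqrt (x ^ 2 + y ^ 2)| ≤ 1 := by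
  obtain ⟨ha0, -⟩ := ha
  have ha1 : 0 < a + 1 := by linarith
  set s := √(a ^ 2 + 1)
  set t := √(x ^ 2 + y ^ 2)
  set S := (x + y) * (s / (a + 1))
  have hs : s ≤ a + 1 := by simpa using Real.sqrt_sq_add_sq_le_add ha0 zero_le_one
  have hCS : |x - a * y| / (a + 1) ≤ s * t / (a + 1) := by
    gcongr; exact abs_sub_mul_le_sqrt_mul_sqrt a x y
  have ht : s * t / (a + 1) ≤ t := by
    rw [div_le_iff₀ ha1, mul_comm]; gcongr
  have hS : s * t / (a + 1) ≤ S :=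
    calc s * t / (a + 1) = t * (s / (a + 1)) := by ring
      _ ≤ (x + y) * (s / (a + 1)) := by gcongr; exact Real.sqrt_sq_add_sq_le_add hx.le hy.le
  refine abs_sub_le_of_abs_sq_sub_sq_le (by positivity) ?_
  rw [sq_add_mul_sqrt_div_sub_sq_sqrt x y ha1.ne']
  calc |-2 * (a * x - y) * (x - a * y) / (a + 1) ^ 2|
      = 2 * |a * x - y| * |x - a * y| / (a + 1) ^ 2 := by
        rw [abs_div, abs_mul, abs_mul, abs_of_pos (by positivity : (0 : ℝ) < (a + 1) ^ 2)]
        norm_num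
    _ ≤ 2 * (a + 1) * |x - a * y| / (a + 1) ^ 2 := by gcongr; linarith
    _ = |x - a * y| / (a + 1) + |x - a * y| / (a + 1) := by field_simp; ring
    _ ≤ (S + t) * 1 := by linarith
end

section
/- Let a ∈ [0,1] and b ∈ ℝ, and let ℓ be the line y = a·x + b in ℝ². Say that a grid point v = (v₁, v₂) ∈ ℤ² lies on the highway of ℓ if there exists x ∈ [v₁ − 1/2, v₁ + 1/2) with a·x + b ∈ [v₂ − 1/2, v₂ + 1/2). Then for any two grid points u, v lying on the highway of ℓ: |(√(a² + 1)/(a + 1))·‖u−v‖₁ − ‖u−v‖₂| ≤ 1, where ‖·‖₁ and ‖·‖₂ are the ℓ¹ and Euclidean norms on ℝ² applied to the integer points. -/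
/-- Vertices of the grid graph: integer points of the plane. -/
abbrev V : Type := ℤ × ℤ

/-- A grid point `v` lies on the highway of the line `y = a*x + b` if the line meets the
half-open unit square `[v₁ - 1/2, v₁ + 1/2) × [v₂ - 1/2, v₂ + 1/2)` centered at `v`. -/
def OnHighway (a b : ℝ) (v : V) : Prop :=
  ∃ x : ℝ, x ∈ Set.Ico ((v.1 : ℝ) - 1 / 2) ((v.1 : ℝ) + 1 / 2) ∧
    a * x + b ∈ Set.Ico ((v.2 : ℝ) - 1 / 2) ((v.2 : ℝ) + 1 / 2)

lemma unsq {A B : ℝ} (hA : 0 ≤ A) (hB : 0 ≤ B) (h : A ^ 2 ≤ B ^ 2) : A ≤ B := by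
  nlinarith

lemma key0 (a s X Y N : ℝ) (ha0 : 0 ≤ a) (ha1 : a ≤ 1)
    (hs : s ^ 2 = a ^ 2 + 1) (hs0 : 0 ≤ s)
    (hN : N ^ 2 = X ^ 2 + Y ^ 2) (hN0 : 0 ≤ N)
    (hNX : |X| ≤ N) (hNY : |Y| ≤ N)
    (he : |Y - a * X| ≤ 1 + a) (hX : 0 ≤ X) :
    s * (|X| + |Y|) ≤ (a + 1) + (a + 1) * N ∧
      (a + 1) * N ≤ (a + 1) + s * (|X| + |Y|) := by
  have hs1 : 1 ≤ s := by nlinarith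
  have hsa : s ≤ 1 + a := by nlinarith
  have hXN : X ≤ N := le_trans (le_abs_self X) hNX
  have hYN : -Y ≤ N := le_trans (neg_le_abs Y) hNY
  have hYN' : Y ≤ N := le_trans (le_abs_self Y) hNY
  have he1 := abs_le.mp he
  have hNN : (a + 1) ^ 2 * N ^ 2 = (a + 1) ^ 2 * (X ^ 2 + Y ^ 2) := by rw [hN]
  rcases le_or_gt 0 Y with hY | hY
  · rw [abs_of_nonneg hX, abs_of_nonneg hY]
    have hsN0 : 0 ≤ s * N := mul_nonneg hs0 hN0
    have hss : s ^ 2 * (X + Y) ^ 2 = (a ^ 2 + 1) * (X + Y) ^ 2 := by rw [hs]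
    have hsN2 : (s * N) ^ 2 = (a ^ 2 + 1) * (X ^ 2 + Y ^ 2) := by
      rw [mul_pow, hs, hN]
    have hf2 : (X - a * Y) ^ 2 ≤ (s * N) ^ 2 := by
      linarith [sq_nonneg (a * X + Y), hsN2]
    have hf : |X - a * Y| ≤ s * N :=
      unsq (abs_nonneg _) hsN0 (by rw [sq_abs]; exact hf2)
    have hf' : |X - a * Y| ≤ s * (X + Y) := by
      have p1 : 0 ≤ (s - 1) * X := mul_nonneg (by linarith) hX
      have p2 : 0 ≤ (s - a) * Y := mul_nonneg (by linarith) hY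
      have p3 : 0 ≤ (s + a) * Y := mul_nonneg (by linarith) hY
      have p4 : 0 ≤ (s + 1) * X := mul_nonneg (by linarith) hX
      rw [abs_le]
      constructor <;> linarith [p1, p2, p3, p4]
    have haN : 0 ≤ (a + 1) * N := mul_nonneg (by linarith) hN0
    constructor
    · have hef : (Y - a * X) * (X - a * Y) ≤ (1 + a) * ((1 + a) * N) := by
        have q1 : (Y - a * X) * (X - a * Y) ≤ (1 + a) * (s * N) := by
          calc (Y - a * X) * (X - a * Y) ≤ |Y - a * X| * |X - a * Y| := by
                rw [← abs_mul]; exact le_abs_self _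
            _ ≤ (1 + a) * (s * N) := mul_le_mul he hf (abs_nonneg _) (by linarith)
        have q2 : s * N ≤ (1 + a) * N := mul_le_mul_of_nonneg_right hsa hN0
        have q3 : (1 + a) * (s * N) ≤ (1 + a) * ((1 + a) * N) :=
          mul_le_mul_of_nonneg_left q2 (by linarith)
        linarith
      have hsq : (s * (X + Y)) ^ 2 ≤ ((a + 1) + (a + 1) * N) ^ 2 := by
        linarith [hef, hNN, hss, sq_nonneg (a + 1)]
      exact unsq (mul_nonneg hs0 (by linarith)) (by linarith) hsq
    · have hef : -((Y - a * X) * (X - a * Y)) ≤ (1 + a) * (s * (X + Y)) := by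
        calc -((Y - a * X) * (X - a * Y)) ≤ |Y - a * X| * |X - a * Y| := by
              rw [← abs_mul]; exact neg_le_abs _
          _ ≤ (1 + a) * (s * (X + Y)) := mul_le_mul he hf' (abs_nonneg _) (by linarith)
      have hsq : ((a + 1) * N) ^ 2 ≤ ((a + 1) + s * (X + Y)) ^ 2 := by
        linarith [hef, hNN, hss, sq_nonneg (a + 1)]
      have hsXY : 0 ≤ s * (X + Y) := mul_nonneg hs0 (by linarith)
      exact unsq haN (by linarith) hsq
  · rw [abs_of_nonneg hX, abs_of_neg hY]
    have hax : 0 ≤ a * X := mul_nonneg ha0 hX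
    have he' : a * X - Y ≤ 1 + a := by
      have h2 : |Y - a * X| = a * X - Y := by
        rw [abs_of_nonpos (by linarith)]; ring
      linarith [h2 ▸ he]
    constructor
    · have p : 0 ≤ (1 + a - s) * (X - Y) :=
        mul_nonneg (by linarith) (by linarith)
      rcases le_or_gt X 1 with hX1 | hX1
      · have q : 0 ≤ a * (1 + N - X + Y) := mul_nonneg ha0 (by linarith)
        linarith [p, q]
      · have r : 0 ≤ a * (X - 1) := mul_nonneg ha0 (by linarith)
        have q : 0 ≤ a * (1 + N - X + Y) := mul_nonneg ha0 (by linarith)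
        linarith [p, q]
    · have hNL : N ≤ X - Y := by
        have hxy : 0 ≤ X * (-Y) := mul_nonneg hX (by linarith)
        exact unsq hN0 (by linarith) (by nlinarith)
      have haL : a * (X - Y) ≤ 1 + a := by
        nlinarith [mul_nonneg (sub_nonneg.mpr ha1) (by linarith : (0:ℝ) ≤ -Y)]
      linarith [mul_nonneg (sub_nonneg.mpr hs1) hN0,
        mul_nonneg hs0 (sub_nonneg.mpr hNL),
        mul_nonneg ha0 (sub_nonneg.mpr hNL)]

lemma key (a s X Y N : ℝ) (ha0 : 0 ≤ a) (ha1 : a ≤ 1)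
    (hs : s ^ 2 = a ^ 2 + 1) (hs0 : 0 ≤ s)
    (hN : N ^ 2 = X ^ 2 + Y ^ 2) (hN0 : 0 ≤ N)
    (hNX : |X| ≤ N) (hNY : |Y| ≤ N)
    (he : |Y - a * X| ≤ 1 + a) :
    |s / (a + 1) * (|X| + |Y|) - N| ≤ 1 := by
  have hpos : (0:ℝ) < a + 1 := by linarith
  have main : s * (|X| + |Y|) ≤ (a + 1) + (a + 1) * N ∧
      (a + 1) * N ≤ (a + 1) + s * (|X| + |Y|) := by
    rcases le_or_gt 0 X with hX | hX
    · exact key0 a s X Y N ha0 ha1 hs hs0 hN hN0 hNX hNY he hX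
    · have h := key0 a s (-X) (-Y) N ha0 ha1 hs hs0 (by rw [hN]; ring) hN0
        (by rwa [abs_neg]) (by rwa [abs_neg])
        (by rw [show -Y - a * -X = -(Y - a * X) by ring, abs_neg]; exact he)
        (by linarith)
      rwa [abs_neg, abs_neg] at h
  have hL : s / (a + 1) * (|X| + |Y|) = s * (|X| + |Y|) / (a + 1) := by ring
  rw [hL, abs_sub_le_iff]
  constructor
  · rw [sub_le_iff_le_add, div_le_iff₀ hpos]
    nlinarith [main.1]
  · rw [sub_le_iff_le_add, ← sub_le_iff_le_add', le_div_iff₀ hpos]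
    nlinarith [main.2]

lemma highway_err (a b : ℝ) (ha0 : 0 ≤ a) (v : V) (h : OnHighway a b v) :
    |(v.2 : ℝ) - (a * (v.1 : ℝ) + b)| ≤ (1 + a) / 2 := by
  obtain ⟨x, ⟨hx1, hx2⟩, hy1, hy2⟩ := h
  have h1 : a * (x - (v.1 : ℝ)) ≤ a * (1 / 2) :=
    mul_le_mul_of_nonneg_left (by linarith) ha0
  have h2 : a * (-(1 / 2)) ≤ a * (x - (v.1 : ℝ)) :=
    mul_le_mul_of_nonneg_left (by linarith) ha0
  rw [abs_le]
  constructor <;> nlinarith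

/-- For a line of slope `a ∈ [0,1]` and any grid points `u, v` on its
highway, `|(√(a² + 1) / (a + 1)) * ‖u - v‖₁ - ‖u - v‖₂| ≤ 1`. -/
theorem stmt4 (a b : ℝ) (ha : a ∈ Set.Icc (0 : ℝ) 1) (u v : V)
    (hu : OnHighway a b u) (hv : OnHighway a b v) :
    |Real.sqrt (a ^ 2 + 1) / (a + 1) *
        (|(u.1 : ℝ) - (v.1 : ℝ)| + |(u.2 : ℝ) - (v.2 : ℝ)|) -
      Real.sqrt (((u.1 : ℝ) - (v.1 : ℝ)) ^ 2 + ((u.2 : ℝ) - (v.2 : ℝ)) ^ 2)| ≤ 1 := by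
  obtain ⟨ha0, ha1⟩ := ha
  set X : ℝ := (u.1 : ℝ) - (v.1 : ℝ) with hXdef
  set Y : ℝ := (u.2 : ℝ) - (v.2 : ℝ) with hYdef
  have hu' := highway_err a b ha0 u hu
  have hv' := highway_err a b ha0 v hv
  have he : |Y - a * X| ≤ 1 + a := by
    have hrw : Y - a * X =
        ((u.2 : ℝ) - (a * (u.1 : ℝ) + b)) - ((v.2 : ℝ) - (a * (v.1 : ℝ) + b)) := by
      rw [hXdef, hYdef]; ring
    rw [hrw]
    calc |((u.2 : ℝ) - (a * (u.1 : ℝ) + b)) - ((v.2 : ℝ) - (a * (v.1 : ℝ) + b))|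
        ≤ |(u.2 : ℝ) - (a * (u.1 : ℝ) + b)| + |(v.2 : ℝ) - (a * (v.1 : ℝ) + b)| :=
          abs_sub _ _
      _ ≤ 1 + a := by linarith
  have hsq : (0:ℝ) ≤ a ^ 2 + 1 := by positivity
  have hNsq : (0:ℝ) ≤ X ^ 2 + Y ^ 2 := by positivity
  refine key a (Real.sqrt (a ^ 2 + 1)) X Y (Real.sqrt (X ^ 2 + Y ^ 2)) ha0 ha1
    (Real.sq_sqrt hsq) (Real.sqrt_nonneg _) (Real.sq_sqrt hNsq) (Real.sqrt_nonneg _)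
    ?_ ?_ he
  · rw [← Real.sqrt_sq_eq_abs]
    exact Real.sqrt_le_sqrt (by nlinarith [sq_nonneg Y])
  · rw [← Real.sqrt_sq_eq_abs]
    exact Real.sqrt_le_sqrt (by nlinarith [sq_nonneg X])
end

section
/- The real number arctan(1/2)/π is irrational. -/
/-!
If `arctan (1/2) = (m/n) π` with `n > 0`, then `n · arg (2 + i)` is a multiple of `π`, so
`(2 + i)^n` is real. But writing `(2 + i)^n = a + b i` with `a, b ∈ ℤ`, the pair `(a, b)` is
`(2, 1)` or `(3, 4)` modulo 5 for every `n ≥ 1`, so `b ≠ 0`.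
-/

open Real

namespace Complex

theorem arg_eq_arctan_of_re_pos {z : ℂ} (hz : 0 < z.re) :
    arg z = Real.arctan (z.im / z.re) := by
  have hlt := abs_lt.mp (abs_arg_lt_pi_div_two_iff.mpr (Or.inl hz))
  rw [← tan_arg, Real.arctan_tan hlt.1 hlt.2]

theorem im_pow_eq_norm_pow_mul_sin (z : ℂ) (n : ℕ) :
    (z ^ n).im = ‖z‖ ^ n * Real.sin (n * arg z) := by
  conv_lhs => rw [← norm_mul_exp_arg_mul_I z]
  rw [mul_pow, ← exp_nat_mul, ← mul_assoc, ← ofReal_natCast, ← ofReal_mul,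
    ← ofReal_pow, im_ofReal_mul, exp_ofReal_mul_I_im]

theorem irrational_arg_div_pi_of_im_pow_ne_zero {z : ℂ}
    (h : ∀ n : ℕ, 0 < n → (z ^ n).im ≠ 0) : Irrational (arg z / π) := by
  rintro ⟨q, hq⟩
  have hmul : (q.den : ℝ) * arg z = q.num * π := by
    rw [eq_div_iff pi_ne_zero, Rat.cast_def] at hq
    rw [← hq]
    field_simp
  apply h q.den q.pos
  rw [im_pow_eq_norm_pow_mul_sin, hmul, Real.sin_int_mul_pi, mul_zero]

end Complex

namespace GaussianInt

theorem two_add_I_pow_mod_five {n : ℕ} (hn : 0 < n) :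
    ((⟨2, 1⟩ : GaussianInt) ^ n).re % 5 = 2 ∧ ((⟨2, 1⟩ : GaussianInt) ^ n).im % 5 = 1 ∨
      ((⟨2, 1⟩ : GaussianInt) ^ n).re % 5 = 3 ∧ ((⟨2, 1⟩ : GaussianInt) ^ n).im % 5 = 4 := by
  induction n, hn using Nat.le_induction with
  | base => decide
  | succ n _ ih =>
    rw [pow_succ, Zsqrtd.re_mul, Zsqrtd.im_mul]
    dsimp only
    omega

theorem im_two_add_I_pow_ne_zero {n : ℕ} (hn : 0 < n) : ((2 + Complex.I) ^ n).im ≠ 0 := by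
  have hcast : (2 + Complex.I) ^ n = toComplex ((⟨2, 1⟩ : GaussianInt) ^ n) := by
    rw [map_pow, toComplex_def']
    norm_num
  rw [hcast, ← intCast_im, Int.cast_ne_zero]
  have := two_add_I_pow_mod_five hn
  omega

end GaussianInt

/-- The real number `arctan(1/2)/π` is irrational. -/
theorem stmt6 : Irrational (Real.arctan (1 / 2) / Real.pi) := by
  have harg : Complex.arg (2 + Complex.I) = arctan (1 / 2) := by
    rw [Complex.arg_eq_arctan_of_re_pos] <;> norm_num
  rw [← harg]
  exact Complex.irrational_arg_div_pi_of_im_pow_ne_zero fun _ ↦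
    GaussianInt.im_two_add_I_pow_ne_zero
end

section
/- Let c, K > 0, μ > 1, and ε₀ > 0, and let (ε_i)_{i≥0} be a sequence of real numbers with ε₀ as its initial term such that for all i: 0 < ε_{i+1} ≤ ε_i and ε_i − ε_{i+1} ≥ c·5^(−K·ε_i^((1−μ)/2)). Then there exists a constant C′ > 0 (depending only on c, K, μ, ε₀) such that for every ε ∈ (0, ε₀) and every index i ≥ C′·5^(C′·ε^((1−μ)/2)), one has ε_i ≤ ε. -/
/-!
While `e n > ε`, the decay hypothesis together with `e n ^ p ≤ ε ^ p` (as `p = (1 - μ)/2 < 0`)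
gives a uniform step `e n - e (n + 1) ≥ g := c * 5 ^ (-(K * ε ^ p))`. Hence `e` drops below `ε`
after at most `ε₀ / g = (ε₀ / c) * 5 ^ (K * ε ^ p)` steps, which is at most `C' * 5 ^ (C' * ε ^ p)`
for `C' = max K (ε₀ / c)`.
-/

theorem le_of_sub_le_mul_of_step {e : ℕ → ℝ} {ε g : ℝ} (hmono : ∀ n, e (n + 1) ≤ e n)
    (hstep : ∀ n, ε < e n → g ≤ e n - e (n + 1)) {n : ℕ} (hn : e 0 - ε ≤ n * g) : e n ≤ ε := by
  have hdrop : ∀ m : ℕ, ε < e m → e m ≤ e 0 - m * g := by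
    intro m
    induction m with
    | zero => simp
    | succ m ih =>
      intro hlt
      have hm : ε < e m := hlt.trans_le (hmono m)
      push_cast
      linarith [ih hm, hstep m hm]
  by_contra! hlt
  linarith [hdrop n hlt]

theorem rpow_neg_mul_rpow_le_of_le {b K p ε x : ℝ} (hb : 1 ≤ b) (hK : 0 ≤ K) (hp : p ≤ 0)
    (hε : 0 < ε) (hεx : ε ≤ x) : b ^ (-(K * ε ^ p)) ≤ b ^ (-(K * x ^ p)) := by
  refine Real.rpow_le_rpow_of_exponent_le hb (neg_le_neg ?_)
  exact mul_le_mul_of_nonneg_left (Real.rpow_le_rpow_of_nonpos hε hεx hp) hK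

theorem le_mul_rpow_mul_mul_rpow_neg {b a c K C s : ℝ} (hb : 1 ≤ b) (hc : 0 < c) (hs : 0 ≤ s)
    (hC : 0 ≤ C) (hCK : K ≤ C) (hCa : a / c ≤ C) :
    a ≤ C * b ^ (C * s) * (c * b ^ (-(K * s))) := by
  have hpow : b ^ (K * s) ≤ b ^ (C * s) :=
    Real.rpow_le_rpow_of_exponent_le hb (mul_le_mul_of_nonneg_right hCK hs)
  have hinv : b ^ (K * s) * b ^ (-(K * s)) = 1 := by
    rw [← Real.rpow_add (zero_lt_one.trans_le hb), add_neg_cancel, Real.rpow_zero]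
  calc a = a / c * c * (b ^ (K * s) * b ^ (-(K * s))) := by
        rw [div_mul_cancel₀ a hc.ne', hinv, mul_one]
    _ = a / c * b ^ (K * s) * (c * b ^ (-(K * s))) := by ring
    _ ≤ C * b ^ (C * s) * (c * b ^ (-(K * s))) := by gcongr

theorem stmt8_general (c K μ ε₀ : ℝ) (hc : 0 < c) (hK : 0 < K) (hμ : 1 < μ)
    (e : ℕ → ℝ) (h0 : e 0 = ε₀)
    (hmono : ∀ i, e (i + 1) ≤ e i)
    (hgap : ∀ i, c * (5 : ℝ) ^ (-(K * e i ^ ((1 - μ) / 2))) ≤ e i - e (i + 1)) :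
    ∃ C' : ℝ, 0 < C' ∧
      ∀ ε ∈ Set.Ioo (0 : ℝ) ε₀, ∀ i : ℕ,
        C' * (5 : ℝ) ^ (C' * ε ^ ((1 - μ) / 2)) ≤ (i : ℝ) → e i ≤ ε := by
  have hp : (1 - μ) / 2 ≤ 0 := by linarith
  have hb : (1 : ℝ) ≤ 5 := by norm_num
  set C' := max K (ε₀ / c)
  refine ⟨C', lt_max_of_lt_left hK, ?_⟩
  rintro ε ⟨hε, -⟩ i hi
  set g := c * (5 : ℝ) ^ (-(K * ε ^ ((1 - μ) / 2)))
  have hg : 0 ≤ g := by positivity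
  refine le_of_sub_le_mul_of_step (g := g) hmono (fun n hn => ?_) ?_
  · exact (mul_le_mul_of_nonneg_left
      (rpow_neg_mul_rpow_le_of_le hb hK.le hp hε hn.le) hc.le).trans (hgap n)
  · calc e 0 - ε ≤ ε₀ := by linarith
      _ ≤ C' * (5 : ℝ) ^ (C' * ε ^ ((1 - μ) / 2)) * g :=
        le_mul_rpow_mul_mul_rpow_neg hb hc (by positivity) (lt_max_of_lt_left hK).le
          (le_max_left _ _) (le_max_right _ _)
      _ ≤ i * g := mul_le_mul_of_nonneg_right hi hg

/-- Let `c, K > 0`, `μ > 1`, `ε₀ > 0`, and let `(ε_i)` be a sequence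
with initial term `ε₀` satisfying, for all `i`, `0 < ε_{i+1} ≤ ε_i` and
`ε_i - ε_{i+1} ≥ c * 5^(-K * ε_i^((1-μ)/2))`. Then there is a constant `C' > 0` such
that for every `ε ∈ (0, ε₀)` and every index `i ≥ C' * 5^(C' * ε^((1-μ)/2))`, we have
`ε_i ≤ ε`. -/
theorem stmt8 (c K μ ε₀ : ℝ) (hc : 0 < c) (hK : 0 < K) (hμ : 1 < μ) (hε₀ : 0 < ε₀)
    (e : ℕ → ℝ) (h0 : e 0 = ε₀)
    (hpos : ∀ i, 0 < e (i + 1)) (hmono : ∀ i, e (i + 1) ≤ e i)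
    (hgap : ∀ i, c * (5 : ℝ) ^ (-(K * e i ^ ((1 - μ) / 2))) ≤ e i - e (i + 1)) :
    ∃ C' : ℝ, 0 < C' ∧
      ∀ ε ∈ Set.Ioo (0 : ℝ) ε₀, ∀ i : ℕ,
        C' * (5 : ℝ) ^ (C' * ε ^ ((1 - μ) / 2)) ≤ (i : ℝ) → e i ≤ ε :=
  stmt8_general c K μ ε₀ hc hK hμ e h0 hmono hgap
end

section
/- There exists ε ∈ [0,1] with the following property. Assign to each edge of the grid graph on ℤ² an independent random weight that equals 1−ε or 1+ε, each with probability 1/2. Then: (i) for every integer m ≥ 1, E[monodist_w((0,0),(m,0))] = m; and (ii) the sequence E[monodist_w((0,0),(m,m))]/m converges to √2 as m → ∞. Consequently, the expected monotone-path distance normalized by Euclidean distance tends to 1 both in the axis direction and in the diagonal direction. -/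
/-!
Every monotone path from `(0,0)` to `(a,b)` has exactly `a + b` edges. Writing the weights as
`1 + ε s_e` with fair signs `s_e = ±1`, the monotone distance is therefore
`a + b + ε D_{a,b}(s)`, where `D_{a,b}` (`signDist`) is the monotone distance for the weights
`s` alone (for `ε > 0` the minimising path does not depend on `ε`). The law of `s` does not
depend on `ε` either, so `E monodist((0,0),(a,b)) = a + b + ε γ_{a,b}` with
`γ_{a,b} = E D_{a,b}` (`meanSignDist`).
On the axis the path is unique and `γ_{m,0} = 0`. On the diagonal, concatenating paths and
using the translation invariance of the sign field makes `m ↦ γ_{m,m}` subadditive, so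
`γ_{m,m} / m` converges to some `γ ≤ γ_{1,1} = -3/4` (`timeConstant`). Then
`ε = (2 - √2) / (-γ) ∈ (0, 1]` gives `2 + ε γ = √2`.
-/

open MeasureTheory ProbabilityTheory

/-- Adjacency in the grid graph: `u` and `v` are joined iff `‖u - v‖₁ = 1`. -/
def gridAdj (u v : V) : Prop := |u.1 - v.1| + |u.2 - v.2| = 1

/-- The weight of a walk (list of vertices): the sum of `w` over consecutive pairs. -/
noncomputable def walkWeight (w : V → V → ℝ) (p : List V) : ℝ :=
  (List.zipWith w p p.tail).sum

/-- `p` is a monotone walk from `u` to `v`: a walk in the grid graph using exactly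
`‖u - v‖₁` edges. -/
def IsMonoWalk (u v : V) (p : List V) : Prop :=
  p.Chain' gridAdj ∧ p.head? = some u ∧ p.getLast? = some v ∧
    p.length = (|u.1 - v.1| + |u.2 - v.2|).toNat + 1

/-- The monotone-path distance: the infimum of weights of monotone walks. -/
noncomputable def monoDist (w : V → V → ℝ) (u v : V) : ℝ :=
  sInf { c | ∃ p : List V, IsMonoWalk u v p ∧ c = walkWeight w p }

/-- A canonical orientation of the edges of the grid graph: the pair `(v, b)` denotes
the edge from `v` to its East neighbour (if `b = true`) or North neighbour
(if `b = false`); every undirected edge occurs exactly once. -/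
def edgeOf : V × Bool → V × V :=
  fun e => (e.1, if e.2 then (e.1.1 + 1, e.1.2) else (e.1.1, e.1.2 + 1))

namespace MonotoneFPP

/-- Chosen so that `edgeOf e = (e.1, step e.1 e.2)` holds definitionally. -/
def step (u : V) (b : Bool) : V := if b then (u.1 + 1, u.2) else (u.1, u.2 + 1)

@[simp] lemma step_true (u : V) : step u true = (u.1 + 1, u.2) := rfl

@[simp] lemma step_false (u : V) : step u false = (u.1, u.2 + 1) := rfl

lemma step_add (u t : V) (b : Bool) : step (u + t) b = step u b + t := by
  cases b <;> ext <;> simp only [step_true, step_false, Prod.fst_add, Prod.snd_add] <;> ring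

lemma gridAdj_iff (u v : V) :
    gridAdj u v ↔
      v = step u true ∨ v = step u false ∨ u = step v true ∨ u = step v false := by
  simp only [gridAdj, Int.abs_eq_natAbs, step_true, step_false, Prod.ext_iff]
  omega

lemma gridAdj_step (u : V) (b : Bool) : gridAdj u (step u b) := by
  rw [gridAdj_iff]; cases b <;> simp

lemma foldl_step (u : V) (d : List Bool) :
    d.foldl step u = u + ((d.count true : ℤ), (d.count false : ℤ)) := by
  induction d generalizing u with
  | nil => simp
  | cons b d ih => cases b <;> ext <;> simp [ih, add_assoc, add_comm (1 : ℤ)]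

lemma natAbs_add_natAbs_lt_length {p : List V} {u v : V} (hp : p.IsChain gridAdj)
    (hu : p.head? = some u) (hv : p.getLast? = some v) :
    (u.1 - v.1).natAbs + (u.2 - v.2).natAbs < p.length := by
  induction p generalizing u with
  | nil => simp at hu
  | cons x t ih =>
    obtain rfl : x = u := by simpa using hu
    cases t with
    | nil =>
      obtain rfl : x = v := by simpa using hv
      simp
    | cons y t =>
      rw [List.isChain_cons_cons, gridAdj_iff] at hp
      have := ih hp.2 rfl (by simpa using hv)
      simp only [List.length_cons, Prod.ext_iff, step_true, step_false] at *
      omega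

def stepLists (a b : ℕ) : Finset (List Bool) :=
  (List.replicate a true ++ List.replicate b false).permutations.toFinset

lemma mem_stepLists {a b : ℕ} {d : List Bool} :
    d ∈ stepLists a b ↔ d.count true = a ∧ d.count false = b := by
  rw [stepLists, List.mem_toFinset, List.mem_permutations, List.perm_iff_count]
  constructor
  · intro h
    exact ⟨by simpa [List.count_replicate] using h true,
      by simpa [List.count_replicate] using h false⟩
  · rintro ⟨ha, hb⟩ (_ | _) <;> simp [ha, hb, List.count_replicate]

lemma stepLists_nonempty (a b : ℕ) : (stepLists a b).Nonempty :=
  ⟨_, List.mem_toFinset.2 (List.mem_permutations.2 (List.Perm.refl _))⟩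

lemma length_of_mem_stepLists {a b : ℕ} {d : List Bool} (hd : d ∈ stepLists a b) :
    d.length = a + b := by
  rw [← List.count_true_add_count_false d, (mem_stepLists.1 hd).1, (mem_stepLists.1 hd).2]

lemma isChain_scanl_step (u : V) (d : List Bool) : (d.scanl step u).IsChain gridAdj := by
  induction d generalizing u with
  | nil => simp
  | cons b d ih =>
    rw [List.scanl_cons, List.isChain_cons, List.head?_scanl]
    exact ⟨fun y hy => Option.mem_some_iff.1 hy ▸ gridAdj_step u b, ih _⟩

lemma toNat_abs_add_abs_sub_add (u : V) (a b : ℕ) :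
    (|u.1 - (u + ((a : ℤ), (b : ℤ))).1| + |u.2 - (u + ((a : ℤ), (b : ℤ))).2|).toNat = a + b := by
  simp only [Prod.fst_add, Prod.snd_add, sub_add_cancel_left, abs_neg, Nat.abs_cast]
  omega

lemma isMonoWalk_scanl (u : V) (d : List Bool) :
    IsMonoWalk u (u + ((d.count true : ℤ), (d.count false : ℤ))) (d.scanl step u) :=
  ⟨isChain_scanl_step u d, List.head?_scanl, by rw [List.getLast?_scanl, foldl_step],
    by rw [toNat_abs_add_abs_sub_add, List.length_scanl, List.count_true_add_count_false]⟩

lemma exists_scanl_of_isMonoWalk {p : List V} {u : V} {a b : ℕ}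
    (hp : IsMonoWalk u (u + ((a : ℤ), (b : ℤ))) p) :
    ∃ d ∈ stepLists a b, d.scanl step u = p := by
  obtain ⟨hc, hu, hv, hlen⟩ := hp
  rw [toNat_abs_add_abs_sub_add] at hlen
  induction p generalizing u a b with
  | nil => simp at hu
  | cons x t ih =>
    obtain rfl : x = u := by simpa using hu
    cases t with
    | nil =>
      have : a = 0 ∧ b = 0 := by simpa [Prod.ext_iff] using hv
      exact ⟨[], by simp [mem_stepLists, this], rfl⟩
    | cons y t =>
      replace hc : gridAdj x y ∧ (y :: t).IsChain gridAdj := List.isChain_cons_cons.1 hc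
      rw [List.getLast?_cons_cons] at hv
      have hlt := natAbs_add_natAbs_lt_length hc.2 rfl hv
      simp only [List.length_cons] at hlt hlen
      -- A West or South first step would leave a walk too short to reach the target.
      rcases (gridAdj_iff _ _).1 hc.1 with rfl | rfl | rfl | rfl <;>
        simp only [step_true, step_false, Prod.fst_add, Prod.snd_add, add_sub_add_left_eq_sub,
          sub_add_cancel_left, Int.natAbs_neg, Int.natAbs_natCast] at hlt
      · obtain ⟨a, rfl⟩ : ∃ a', a = a' + 1 := ⟨a - 1, by omega⟩
        have hend :
            step x true + ((a : ℤ), (b : ℤ)) = x + (((a + 1 : ℕ) : ℤ), (b : ℤ)) := by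
          ext <;> simp only [step_true, Prod.fst_add, Prod.snd_add, Nat.cast_add, Nat.cast_one]
          ring
        obtain ⟨d, hd, hdp⟩ := ih hc.2 rfl (hend ▸ hv) (by rw [List.length_cons]; omega)
        exact ⟨true :: d, by simpa [mem_stepLists] using hd, by rw [List.scanl_cons, hdp]⟩
      · obtain ⟨b, rfl⟩ : ∃ b', b = b' + 1 := ⟨b - 1, by omega⟩
        have hend :
            step x false + ((a : ℤ), (b : ℤ)) = x + ((a : ℤ), ((b + 1 : ℕ) : ℤ)) := by
          ext <;> simp only [step_false, Prod.fst_add, Prod.snd_add, Nat.cast_add, Nat.cast_one]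
          ring
        obtain ⟨d, hd, hdp⟩ := ih hc.2 rfl (hend ▸ hv) (by rw [List.length_cons]; omega)
        exact ⟨false :: d, by simpa [mem_stepLists] using hd, by rw [List.scanl_cons, hdp]⟩
      all_goals omega

lemma monoDist_eq_inf' (w : V → V → ℝ) (u : V) (a b : ℕ) :
    monoDist w u (u + ((a : ℤ), (b : ℤ))) =
      (stepLists a b).inf' (stepLists_nonempty a b) (fun d => walkWeight w (d.scanl step u)) := by
  rw [monoDist, Finset.inf'_eq_csInf_image]
  congr 1
  ext c
  simp only [Set.mem_ofPred_eq, Set.mem_image, Finset.mem_coe]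
  constructor
  · rintro ⟨p, hp, rfl⟩
    obtain ⟨d, hd, rfl⟩ := exists_scanl_of_isMonoWalk hp
    exact ⟨d, hd, rfl⟩
  · rintro ⟨d, hd, rfl⟩
    obtain ⟨ha, hb⟩ := mem_stepLists.1 hd
    exact ⟨_, by simpa [ha, hb] using isMonoWalk_scanl u d, rfl⟩

lemma walkWeight_cons_cons (w : V → V → ℝ) (x y : V) (p : List V) :
    walkWeight w (x :: y :: p) = w x y + walkWeight w (y :: p) := by
  simp [walkWeight]

lemma walkWeight_scanl_cons (w : V → V → ℝ) (u : V) (b : Bool) (d : List Bool) :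
    walkWeight w ((b :: d).scanl step u) =
      w u (step u b) + walkWeight w (d.scanl step (step u b)) := by
  cases d <;> simp [walkWeight_cons_cons]

section stepWalks

variable (w w' : V → V → ℝ) (u : V)

lemma walkWeight_scanl_append (d₁ d₂ : List Bool) :
    walkWeight w ((d₁ ++ d₂).scanl step u) =
      walkWeight w (d₁.scanl step u) + walkWeight w (d₂.scanl step (d₁.foldl step u)) := by
  induction d₁ generalizing u with
  | nil => simp [walkWeight]
  | cons b d ih =>
    rw [List.cons_append, walkWeight_scanl_cons, walkWeight_scanl_cons, ih]
    simp [add_assoc]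

lemma walkWeight_scanl_add (t : V) (d : List Bool) :
    walkWeight w (d.scanl step (u + t)) =
      walkWeight (fun x y => w (x + t) (y + t)) (d.scanl step u) := by
  induction d generalizing u with
  | nil => simp [walkWeight]
  | cons b d ih => rw [walkWeight_scanl_cons, walkWeight_scanl_cons, step_add, ih]

variable {w w'} in
lemma walkWeight_scanl_congr (h : ∀ x b, w x (step x b) = w' x (step x b)) (d : List Bool) :
    walkWeight w (d.scanl step u) = walkWeight w' (d.scanl step u) := by
  induction d generalizing u with
  | nil => simp [walkWeight]
  | cons b d ih => rw [walkWeight_scanl_cons, walkWeight_scanl_cons, h, ih]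

lemma walkWeight_scanl_affine (c ε : ℝ) (d : List Bool) :
    walkWeight (fun x y => c + ε * w x y) (d.scanl step u) =
      c * d.length + ε * walkWeight w (d.scanl step u) := by
  induction d generalizing u with
  | nil => simp [walkWeight]
  | cons b d ih =>
    rw [walkWeight_scanl_cons, walkWeight_scanl_cons, ih, List.length_cons, Nat.cast_succ]; ring

variable {w} in
lemma abs_walkWeight_scanl_le (h : ∀ x b, |w x (step x b)| ≤ 1) (d : List Bool) :
    |walkWeight w (d.scanl step u)| ≤ d.length := by
  induction d generalizing u with
  | nil => simp [walkWeight]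
  | cons b d ih =>
    rw [walkWeight_scanl_cons, List.length_cons, Nat.cast_succ, add_comm _ (1 : ℝ)]
    exact (abs_add_le _ _).trans (add_le_add (h u b) (ih _))

end stepWalks

section monoDist

variable (w : V → V → ℝ) (u : V) (a b : ℕ)

variable {w} in
lemma monoDist_congr {w' : V → V → ℝ} (h : ∀ x b, w x (step x b) = w' x (step x b)) :
    monoDist w u (u + ((a : ℤ), (b : ℤ))) = monoDist w' u (u + ((a : ℤ), (b : ℤ))) := by
  simp only [monoDist_eq_inf', walkWeight_scanl_congr u h]

lemma monoDist_affine (c : ℝ) {ε : ℝ} (hε : 0 ≤ ε) :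
    monoDist (fun x y => c + ε * w x y) u (u + ((a : ℤ), (b : ℤ))) =
      c * (a + b) + ε * monoDist w u (u + ((a : ℤ), (b : ℤ))) := by
  have hmono : Monotone fun r : ℝ => c * (a + b) + ε * r :=
    fun r s h => add_le_add_right (mul_le_mul_of_nonneg_left h hε) _
  rw [monoDist_eq_inf', monoDist_eq_inf', Finset.apply_inf'_eq_inf'_comp (stepLists_nonempty a b)
    (fun r : ℝ => c * (a + b) + ε * r) fun r s => hmono.map_min]
  refine Finset.inf'_congr _ rfl fun d hd => ?_
  rw [Function.comp_apply, walkWeight_scanl_affine, length_of_mem_stepLists hd]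
  push_cast; rfl

lemma monoDist_add_le (a' b' : ℕ) :
    monoDist w u (u + ((a : ℤ), (b : ℤ)) + ((a' : ℤ), (b' : ℤ))) ≤
      monoDist w u (u + ((a : ℤ), (b : ℤ))) +
        monoDist w (u + ((a : ℤ), (b : ℤ)))
          (u + ((a : ℤ), (b : ℤ)) + ((a' : ℤ), (b' : ℤ))) := by
  obtain ⟨d₁, hd₁, h₁⟩ := Finset.exists_mem_eq_inf' (stepLists_nonempty a b)
    fun d => walkWeight w (d.scanl step u)
  obtain ⟨d₂, hd₂, h₂⟩ := Finset.exists_mem_eq_inf' (stepLists_nonempty a' b')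
    fun d => walkWeight w (d.scanl step (u + ((a : ℤ), (b : ℤ))))
  rw [mem_stepLists] at hd₁ hd₂
  have hend : d₁.foldl step u = u + ((a : ℤ), (b : ℤ)) := by rw [foldl_step, hd₁.1, hd₁.2]
  have hsum : u + ((a : ℤ), (b : ℤ)) + ((a' : ℤ), (b' : ℤ)) =
      u + (((a + a' : ℕ) : ℤ), ((b + b' : ℕ) : ℤ)) := by
    rw [add_assoc, Prod.mk_add_mk]; push_cast; rfl
  rw [monoDist_eq_inf', monoDist_eq_inf', h₁, h₂, hsum, monoDist_eq_inf', ← hend,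
    ← walkWeight_scanl_append]
  exact Finset.inf'_le _ (mem_stepLists.2 (by simp [hd₁, hd₂]))

lemma monoDist_add_add (t : V) :
    monoDist w (u + t) (u + t + ((a : ℤ), (b : ℤ))) =
      monoDist (fun x y => w (x + t) (y + t)) u (u + ((a : ℤ), (b : ℤ))) := by
  simp only [monoDist_eq_inf', walkWeight_scanl_add]

variable {w} in
lemma abs_monoDist_le (h : ∀ x b, |w x (step x b)| ≤ 1) :
    |monoDist w u (u + ((a : ℤ), (b : ℤ)))| ≤ a + b := by
  obtain ⟨d, hd, hmin⟩ := Finset.exists_mem_eq_inf' (stepLists_nonempty a b)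
    fun d => walkWeight w (d.scanl step u)
  rw [monoDist_eq_inf', hmin]
  refine (abs_walkWeight_scanl_le u h d).trans_eq ?_
  rw [length_of_mem_stepLists hd]
  push_cast; rfl

lemma stepLists_zero_right : stepLists a 0 = {List.replicate a true} := by
  ext d
  rw [mem_stepLists, Finset.mem_singleton]
  constructor
  · rintro ⟨htrue, hfalse⟩
    have := List.count_true_add_count_false d
    refine List.eq_replicate_iff.2 ⟨by omega, fun b hb => ?_⟩
    cases b
    · exact absurd hb (List.count_eq_zero.1 hfalse)
    · rfl
  · rintro rfl
    simp [List.count_replicate]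

lemma walkWeight_scanl_replicate_true :
    walkWeight w ((List.replicate a true).scanl step u) =
      ∑ i ∈ Finset.range a, w (u + ((i : ℤ), 0)) (step (u + ((i : ℤ), 0)) true) := by
  induction a generalizing u with
  | zero => simp [walkWeight]
  | succ a ih =>
    have hshift (i : ℕ) : u + (((i + 1 : ℕ) : ℤ), 0) = step u true + ((i : ℤ), 0) := by
      ext <;> simp only [Prod.fst_add, Prod.snd_add, step_true, Nat.cast_add, Nat.cast_one,
        add_zero]
      ring
    rw [List.replicate_succ, walkWeight_scanl_cons, ih, Finset.sum_range_succ']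
    simp only [hshift, Nat.cast_zero, Prod.mk_zero_zero, add_zero]
    ring

lemma monoDist_row :
    monoDist w u (u + ((a : ℤ), 0)) =
      ∑ i ∈ Finset.range a, w (u + ((i : ℤ), 0)) (step (u + ((i : ℤ), 0)) true) := by
  have := monoDist_eq_inf' w u a 0
  simp only [Nat.cast_zero, stepLists_zero_right, Finset.inf'_singleton] at this
  rw [this, walkWeight_scanl_replicate_true]

lemma monoDist_one_one :
    monoDist w u (u + (1, 1)) =
      min (w u (step u true) + w (step u true) (step (step u true) false))
        (w u (step u false) + w (step u false) (step (step u false) true)) := by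
  have hs : stepLists 1 1 = {[true, false], [false, true]} := by
    simp [stepLists, List.permutations]
  have := monoDist_eq_inf' w u 1 1
  simp only [Nat.cast_one, hs] at this
  rw [this]
  simp [walkWeight]

end monoDist

lemma integral_uniformOn_univ {α : Type*} [Fintype α] [MeasurableSpace α]
    [MeasurableSingletonClass α] (f : α → ℝ) :
    ∫ x, f x ∂uniformOn Set.univ = (∑ x, f x) / Fintype.card α := by
  rw [integral_fintype (Integrable.of_finite), Finset.sum_div]
  refine Finset.sum_congr rfl fun x _ => ?_
  rw [measureReal_def, uniformOn_univ, Measure.count_singleton, smul_eq_mul]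
  simp [div_eq_inv_mul]

noncomputable def coinField : Measure (V × Bool → Bool) :=
  Measure.infinitePi fun _ => uniformOn Set.univ

instance : IsProbabilityMeasure coinField := by
  unfold coinField; infer_instance

lemma measurePreserving_coinField_comp {f : V × Bool → V × Bool} (hf : f.Injective) :
    MeasurePreserving (fun η e => η (f e)) coinField coinField :=
  ⟨by fun_prop, Measure.map_infinitePi_infinitePi_of_inj hf⟩

def boolSign (b : Bool) : ℝ := if b then 1 else -1

lemma abs_boolSign (b : Bool) : |boolSign b| = 1 := by
  cases b <;> simp [boolSign]

lemma measurable_boolSign_apply (e : V × Bool) :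
    Measurable fun η : V × Bool → Bool => boolSign (η e) :=
  (measurable_from_top (f := boolSign)).comp (measurable_pi_apply e)

/-- Only the values `signWeight η u (step u b) = boolSign (η (u, b))` are ever used. -/
def signWeight (η : V × Bool → Bool) (u v : V) : ℝ :=
  boolSign (η (u, decide (v = step u true)))

@[simp] lemma signWeight_step (η : V × Bool → Bool) (u : V) (b : Bool) :
    signWeight η u (step u b) = boolSign (η (u, b)) := by
  cases b <;> simp [signWeight, Prod.ext_iff]

noncomputable def signDist (a b : ℕ) (η : V × Bool → Bool) : ℝ :=
  monoDist (signWeight η) (0, 0) ((a : ℤ), (b : ℤ))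

noncomputable def meanSignDist (a b : ℕ) : ℝ := ∫ η, signDist a b η ∂coinField

lemma measurable_walkWeight_signWeight (u : V) (d : List Bool) :
    Measurable fun η => walkWeight (signWeight η) (d.scanl step u) := by
  induction d generalizing u with
  | nil => simp [walkWeight]
  | cons b d ih =>
    simp only [walkWeight_scanl_cons, signWeight_step]
    exact (measurable_boolSign_apply (u, b)).add (ih _)

lemma measurable_signDist (a b : ℕ) : Measurable (signDist a b) := by
  have h : signDist a b = (stepLists a b).inf' (stepLists_nonempty a b)
      fun d η => walkWeight (signWeight η) (d.scanl step 0) := by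
    ext η
    rw [Finset.inf'_apply, signDist, ← monoDist_eq_inf', zero_add]
    rfl
  rw [h]
  exact Finset.inf'_induction _ _ (fun f hf g hg => hf.min hg)
    fun d _ => measurable_walkWeight_signWeight 0 d

lemma abs_signDist_le (a b : ℕ) (η : V × Bool → Bool) : |signDist a b η| ≤ a + b := by
  have h := abs_monoDist_le (w := signWeight η) 0 a b fun x b => by
    rw [signWeight_step, abs_boolSign]
  rwa [zero_add] at h

lemma integrable_signDist (a b : ℕ) (ν : Measure (V × Bool → Bool)) [IsFiniteMeasure ν] :
    Integrable (signDist a b) ν :=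
  .of_bound (measurable_signDist a b).aestronglyMeasurable _
    (ae_of_all _ fun η => (Real.norm_eq_abs _).trans_le (abs_signDist_le a b η))

lemma abs_meanSignDist_le (a b : ℕ) : |meanSignDist a b| ≤ a + b := by
  simpa [meanSignDist] using norm_integral_le_of_norm_le_const (μ := coinField)
    (ae_of_all _ fun η => (Real.norm_eq_abs _).trans_le (abs_signDist_le a b η))

lemma integral_boolSign_apply (e : V × Bool) : ∫ η, boolSign (η e) ∂coinField = 0 := by
  rw [← integral_map (measurable_pi_apply e).aemeasurable
    measurable_from_top.aestronglyMeasurable, coinField, Measure.infinitePi_map_eval,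
    integral_uniformOn_univ]
  simp [boolSign]

lemma meanSignDist_zero_right (a : ℕ) : meanSignDist a 0 = 0 := by
  have h (η : V × Bool → Bool) :
      signDist a 0 η = ∑ i ∈ Finset.range a, boolSign (η (((i : ℤ), 0), true)) := by
    have := monoDist_row (signWeight η) 0 a
    simp only [zero_add, signWeight_step] at this
    exact this
  simp only [meanSignDist, h]
  rw [integral_finsetSum _ fun i _ => Integrable.of_bound
    (measurable_boolSign_apply _).aestronglyMeasurable 1
    (ae_of_all _ fun η => by rw [Real.norm_eq_abs, abs_boolSign])]
  simp [integral_boolSign_apply]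

lemma signDist_add_le (m n : ℕ) (η : V × Bool → Bool) :
    signDist (m + n) (m + n) η ≤
      signDist m m η + signDist n n fun e => η (e.1 + ((m : ℤ), (m : ℤ)), e.2) := by
  have hsplit := monoDist_add_le (signWeight η) 0 m m n n
  have hshift := monoDist_add_add (signWeight η) 0 n n ((m : ℤ), (m : ℤ))
  have hcongr := monoDist_congr (w := fun x y => signWeight η (x + ((m : ℤ), (m : ℤ)))
    (y + ((m : ℤ), (m : ℤ)))) (w' := signWeight fun e => η (e.1 + ((m : ℤ), (m : ℤ)), e.2))
    0 n n fun x b => by simp [← step_add]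
  simp only [zero_add, Prod.mk_add_mk, ← Nat.cast_add] at hsplit hshift hcongr
  rw [hshift, hcongr] at hsplit
  exact hsplit

lemma translate_injective (t : V) : Function.Injective fun e : V × Bool => (e.1 + t, e.2) :=
  fun e e' h => by
    simp only [Prod.mk.injEq, add_left_inj] at h
    exact Prod.ext h.1 h.2

lemma integral_signDist_comp_translate (n : ℕ) (t : V) :
    ∫ η, signDist n n (fun e => η (e.1 + t, e.2)) ∂coinField = meanSignDist n n := by
  have hinj := translate_injective t
  rw [← integral_map (measurePreserving_coinField_comp hinj).measurable.aemeasurable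
    (measurable_signDist n n).aestronglyMeasurable, (measurePreserving_coinField_comp hinj).map_eq,
    meanSignDist]

lemma subadditive_meanSignDist_diag : Subadditive fun m => meanSignDist m m := by
  intro m n
  have hinj := translate_injective ((m : ℤ), (m : ℤ))
  have hint : Integrable (fun η => signDist n n fun e => η (e.1 + ((m : ℤ), (m : ℤ)), e.2))
      coinField :=
    ((measurePreserving_coinField_comp hinj).integrable_comp
      (measurable_signDist n n).aestronglyMeasurable).2 (integrable_signDist n n _)
  calc meanSignDist (m + n) (m + n)
      ≤ ∫ η, signDist m m η + signDist n n (fun e => η (e.1 + ((m : ℤ), (m : ℤ)), e.2))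
          ∂coinField :=
        integral_mono (integrable_signDist _ _ _) ((integrable_signDist _ _ _).add hint)
          (signDist_add_le m n)
    _ = meanSignDist m m + meanSignDist n n := by
        rw [integral_add (integrable_signDist _ _ _) hint, integral_signDist_comp_translate]; rfl

lemma meanSignDist_one_one : meanSignDist 1 1 = -3 / 4 := by
  let f : Fin 4 → V × Bool := ![((0, 0), true), ((1, 0), false), ((0, 0), false), ((0, 1), true)]
  have hf : f.Injective := by decide
  let g : (Fin 4 → Bool) → ℝ := fun ζ =>
    min (boolSign (ζ 0) + boolSign (ζ 1)) (boolSign (ζ 2) + boolSign (ζ 3))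
  have hsignDist (η : V × Bool → Bool) : signDist 1 1 η = g fun i => η (f i) := by
    have := monoDist_one_one (signWeight η) 0
    simp only [zero_add, signWeight_step] at this
    exact this
  have hsum : ∑ ζ : Fin 4 → Bool,
      min ((if ζ 0 then 1 else -1 : ℤ) + (if ζ 1 then 1 else -1))
        ((if ζ 2 then 1 else -1) + (if ζ 3 then 1 else -1)) = -12 := by
    decide
  have hcast (b : Bool) : boolSign b = ((if b then 1 else -1 : ℤ) : ℝ) := by
    cases b <;> simp [boolSign]
  simp only [meanSignDist, hsignDist]
  rw [← integral_map (φ := fun (η : V × Bool → Bool) (i : Fin 4) => η (f i))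
    (measurable_pi_lambda _ fun i => measurable_pi_apply (f i)).aemeasurable
    (measurable_of_finite g).aestronglyMeasurable, coinField,
    Measure.map_infinitePi_infinitePi_of_inj hf, Measure.infinitePi_eq_pi, ← uniformOn_pi,
    Set.pi_univ, integral_uniformOn_univ]
  simp only [g, hcast, ← Int.cast_add, ← Int.cast_min, ← Int.cast_sum, hsum]
  norm_num

lemma measurable_decide_eq (c : ℝ) : Measurable fun x : ℝ => decide (x = c) := by
  refine measurable_to_bool ?_
  have : (fun x : ℝ => decide (x = c)) ⁻¹' {true} = {c} := by ext; simp
  exact this ▸ measurableSet_singleton c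

lemma map_decide_eq_uniformOn {Ω : Type*} [MeasurableSpace Ω] {μ : Measure Ω}
    [IsProbabilityMeasure μ] {X : Ω → ℝ} (hX : Measurable X) {x : ℝ}
    (hx : μ {ω | X ω = x} = 1 / 2) :
    μ.map (fun ω => decide (X ω = x)) = uniformOn Set.univ := by
  have hset : MeasurableSet {ω | X ω = x} := hX (measurableSet_singleton x)
  have htrue : (fun ω => decide (X ω = x)) ⁻¹' {true} = {ω | X ω = x} := by ext; simp
  have hfalse : (fun ω => decide (X ω = x)) ⁻¹' {false} = {ω | X ω = x}ᶜ := by ext; simp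
  have hm : Measurable fun ω => decide (X ω = x) := (measurable_decide_eq x).comp hX
  rw [Measure.ext_iff_singleton]
  rintro (_ | _) <;> rw [Measure.map_apply hm (measurableSet_singleton _), uniformOn_univ]
  · rw [hfalse, prob_compl_eq_one_sub hset, hx]
    simp [ENNReal.one_sub_inv_two]
  · rw [htrue, hx]
    simp

lemma ae_eq_or_eq_of_measure_eq_half {Ω : Type*} [MeasurableSpace Ω] {μ : Measure Ω}
    [IsProbabilityMeasure μ] {X : Ω → ℝ} (hX : Measurable X) {x y : ℝ} (hxy : x ≠ y)
    (hx : μ {ω | X ω = x} = 1 / 2) (hy : μ {ω | X ω = y} = 1 / 2) :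
    ∀ᵐ ω ∂μ, X ω = x ∨ X ω = y := by
  have hdisj : Disjoint {ω | X ω = x} {ω | X ω = y} :=
    Set.disjoint_left.2 fun ω hωx hωy => hxy (hωx.symm.trans hωy)
  have hunion : μ ({ω | X ω = x} ∪ {ω | X ω = y}) = 1 := by
    rw [measure_union hdisj (hX (measurableSet_singleton y)), hx, hy, ENNReal.add_halves]
  exact (prob_compl_eq_zero_iff ((hX (measurableSet_singleton x)).union
    (hX (measurableSet_singleton y)))).2 hunion

theorem integral_monoDist_eq_add_mul_meanSignDist {Ω : Type*} [MeasurableSpace Ω]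
    {μ : Measure Ω} [IsProbabilityMeasure μ] {W : Ω → V → V → ℝ} {ε : ℝ} (hε : 0 < ε)
    (hmeas : ∀ e : V × Bool, Measurable fun ω => W ω (edgeOf e).1 (edgeOf e).2)
    (hind : iIndepFun (fun (e : V × Bool) ω => W ω (edgeOf e).1 (edgeOf e).2) μ)
    (hlaw : ∀ e : V × Bool,
      μ {ω | W ω (edgeOf e).1 (edgeOf e).2 = 1 - ε} = 1 / 2 ∧
      μ {ω | W ω (edgeOf e).1 (edgeOf e).2 = 1 + ε} = 1 / 2) (a b : ℕ) :
    ∫ ω, monoDist (W ω) (0, 0) ((a : ℤ), (b : ℤ)) ∂μ = a + b + ε * meanSignDist a b := by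
  let coins : Ω → V × Bool → Bool := fun ω e =>
    decide (W ω (edgeOf e).1 (edgeOf e).2 = 1 + ε)
  have hdecide := measurable_decide_eq (1 + ε)
  have hcoins : Measurable coins := measurable_pi_lambda _ fun e => hdecide.comp (hmeas e)
  have hlaw_coins : μ.map coins = coinField := by
    refine ((hind.comp (fun _ x => decide (x = 1 + ε)) fun _ => hdecide)
      |>.map_fun_eq_infinitePi_map fun e => hdecide.comp (hmeas e)).trans ?_
    exact congrArg _ (funext fun e => map_decide_eq_uniformOn (hmeas e) (hlaw e).2)
  have hW : ∀ᵐ ω ∂μ, ∀ e : V × Bool,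
      W ω (edgeOf e).1 (edgeOf e).2 = 1 + ε * boolSign (coins ω e) := by
    refine ae_all_iff.2 fun e => (ae_eq_or_eq_of_measure_eq_half (hmeas e) (by linarith)
      (hlaw e).2 (hlaw e).1).mono fun ω hω => ?_
    rcases hω with hω | hω
    · simp [coins, hω, boolSign]
    · have hne : 1 - ε ≠ 1 + ε := by linarith
      simp only [coins, hω, boolSign, hne, decide_false, Bool.false_eq_true, if_false]
      ring
  calc ∫ ω, monoDist (W ω) (0, 0) ((a : ℤ), (b : ℤ)) ∂μ
      = ∫ ω, (a + b) + ε * signDist a b (coins ω) ∂μ := by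
        refine integral_congr_ae (hW.mono fun ω hω => ?_)
        have := monoDist_congr (w := W ω) (w' := fun x y => 1 + ε * signWeight (coins ω) x y)
          0 a b fun x b' => by rw [signWeight_step]; exact hω (x, b')
        rw [monoDist_affine _ _ _ _ _ hε.le, zero_add, one_mul] at this
        exact this
    _ = ∫ η, (a + b) + ε * signDist a b η ∂(μ.map coins) :=
        (integral_map hcoins.aemeasurable
          (((measurable_signDist a b).const_mul ε).const_add _).aestronglyMeasurable).symm
    _ = a + b + ε * meanSignDist a b := by
        rw [hlaw_coins, integral_add (integrable_const _)
          ((integrable_signDist a b _).const_mul ε), integral_const, integral_const_mul]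
        simp [meanSignDist]

lemma bddBelow_meanSignDist_diag : BddBelow (Set.range fun m : ℕ => meanSignDist m m / m) := by
  refine ⟨-2, ?_⟩
  rintro _ ⟨m, rfl⟩
  rcases Nat.eq_zero_or_pos m with rfl | hm
  · simp
  · have := neg_le_of_abs_le (abs_meanSignDist_le m m)
    rw [le_div_iff₀ (by positivity)]
    linarith

noncomputable def timeConstant : ℝ := subadditive_meanSignDist_diag.lim

lemma tendsto_meanSignDist_diag :
    Filter.Tendsto (fun m : ℕ => meanSignDist m m / m) Filter.atTop (nhds timeConstant) :=
  subadditive_meanSignDist_diag.tendsto_lim bddBelow_meanSignDist_diag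

lemma timeConstant_le : timeConstant ≤ -3 / 4 := by
  simpa [timeConstant, meanSignDist_one_one] using
    subadditive_meanSignDist_diag.lim_le_div bddBelow_meanSignDist_diag one_ne_zero

lemma exists_two_add_mul_timeConstant_eq_sqrt_two :
    ∃ ε ∈ Set.Ioc (0 : ℝ) 1, 2 + ε * timeConstant = √2 := by
  have hneg : timeConstant < 0 := by linarith [timeConstant_le]
  have hsqrt : 5 / 4 ≤ √2 ∧ √2 < 2 := by
    constructor
    · rw [Real.le_sqrt] <;> norm_num
    · rw [Real.sqrt_lt'] <;> norm_num
  refine ⟨(2 - √2) / -timeConstant, ⟨by apply div_pos <;> linarith, ?_⟩, ?_⟩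
  · rw [div_le_one (by linarith)]; linarith [timeConstant_le]
  · field_simp [hneg.ne]; ring

end MonotoneFPP

/-- There is `ε ∈ [0,1]` such that, whenever each edge of the grid
graph independently receives weight `1 - ε` or `1 + ε` with probability `1/2` each:
(i) for every `m ≥ 1`, `E[monodist_w((0,0),(m,0))] = m`; and
(ii) `E[monodist_w((0,0),(m,m))] / m → √2` as `m → ∞`. -/
theorem stmt9 :
    ∃ ε : ℝ, ε ∈ Set.Icc (0 : ℝ) 1 ∧
      ∀ (Ω : Type) [MeasurableSpace Ω] (μ : Measure Ω) [IsProbabilityMeasure μ]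
        (W : Ω → V → V → ℝ),
        (∀ ω u v, W ω u v = W ω v u) →
        (∀ e : V × Bool, Measurable fun ω => W ω (edgeOf e).1 (edgeOf e).2) →
        iIndepFun
          (fun (e : V × Bool) ω => W ω (edgeOf e).1 (edgeOf e).2) μ →
        (∀ e : V × Bool,
          μ {ω | W ω (edgeOf e).1 (edgeOf e).2 = 1 - ε} = 1 / 2 ∧
          μ {ω | W ω (edgeOf e).1 (edgeOf e).2 = 1 + ε} = 1 / 2) →
        (∀ m : ℕ, 1 ≤ m →
            (∫ ω, monoDist (W ω) (0, 0) ((m : ℤ), 0) ∂μ) = (m : ℝ)) ∧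
        Filter.Tendsto
          (fun m : ℕ => (∫ ω, monoDist (W ω) (0, 0) ((m : ℤ), (m : ℤ)) ∂μ) / (m : ℝ))
          Filter.atTop (nhds (Real.sqrt 2)) := by
  obtain ⟨ε, ⟨hε0, hε1⟩, hε⟩ := MonotoneFPP.exists_two_add_mul_timeConstant_eq_sqrt_two
  refine ⟨ε, ⟨hε0.le, hε1⟩, fun Ω _ μ _ W _ hmeas hind hlaw => ⟨fun m _ => ?_, ?_⟩⟩
  · simpa [MonotoneFPP.meanSignDist_zero_right] using
      MonotoneFPP.integral_monoDist_eq_add_mul_meanSignDist hε0 hmeas hind hlaw m 0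
  · rw [← hε]
    refine ((MonotoneFPP.tendsto_meanSignDist_diag.const_mul ε).const_add 2).congr' ?_
    filter_upwards [Filter.eventually_ne_atTop 0] with m hm
    rw [MonotoneFPP.integral_monoDist_eq_add_mul_meanSignDist hε0 hmeas hind hlaw m m]
    field_simp
    ring
end

section
/- Assign to each edge of the grid graph on ℤ² an independent random weight that equals 0 or 2, each with probability 1/2. Then there is a constant C > 0 such that for every integer m ≥ 1: E[monodist_w((0,0),(m,m))] ≤ m + C·√m. -/
open MeasureTheory ProbabilityTheory

open Finset Function
open scoped BigOperators ENNReal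

/-!
Follow the greedy monotone path inside the box `[0, m]²`: at each vertex it takes a weight-0
edge if exactly one of the two forward edges has weight 0, and otherwise steps towards the
diagonal; on the sides `x = m` and `y = m` it is forced along the side. The two edges leaving the
current vertex have not been inspected yet, so a free step costs 2 with probability 1/4
(expected cost 1/2) and a forced step has expected cost 1. Off the diagonal the displacement
`D = x - y` moves away from 0 with probability at most 1/4, which gives
`P(|D_t| ≥ d) ≤ 3 · 3^(-d)`. A forced step at time `t` needs `|D_t| = 2m - t`, so the forced
steps add at most `3/4` to the expected weight `m` of the free steps.
-/

section FreshCoordinates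

variable {ι : Type*} [Fintype ι] [DecidableEq ι]

lemma expect_apply_eq_expect_avg (i : ι) {G : (ι → Bool) → Bool → ℝ}
    (hG : ∀ σ b, G (update σ i b) = G σ) :
    𝔼 σ, G σ (σ i) = 𝔼 σ, (G σ true + G σ false) / 2 := by
  let flip : Equiv.Perm (ι → Bool) :=
    Involutive.toPerm (fun σ => update σ i (!σ i)) fun σ => by simp
  have hflip : 𝔼 σ, G σ (σ i) = 𝔼 σ, G σ (!σ i) :=
    Fintype.expect_equiv flip _ _ fun σ => by
      change G σ (σ i) = G (update σ i (!σ i)) (!update σ i (!σ i) i)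
      simp [hG]
  calc 𝔼 σ, G σ (σ i) = (𝔼 σ, G σ (σ i) + 𝔼 σ, G σ (!σ i)) / 2 := by rw [← hflip]; ring
    _ = 𝔼 σ, (G σ (σ i) + G σ (!σ i)) / 2 := by rw [← expect_add_distrib, expect_div]
    _ = 𝔼 σ, (G σ true + G σ false) / 2 := by
      refine expect_congr rfl fun σ _ => ?_
      cases σ i <;> simp [add_comm]

noncomputable def coinAvg (g : Bool → Bool → ℝ) : ℝ :=
  (g true true + g true false + g false true + g false false) / 4

@[simp]
lemma coinAvg_const (c : ℝ) : coinAvg (fun _ _ => c) = c := by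
  simp only [coinAvg]; ring

lemma coinAvg_mono {g g' : Bool → Bool → ℝ} (h : ∀ a b, g a b ≤ g' a b) :
    coinAvg g ≤ coinAvg g' := by
  unfold coinAvg; linarith [h true true, h true false, h false true, h false false]

lemma expect_mul_coins {i j : ι} (hij : i ≠ j) {F : (ι → Bool) → ℝ}
    (hi : ∀ σ b, F (update σ i b) = F σ) (hj : ∀ σ b, F (update σ j b) = F σ)
    (g : Bool → Bool → ℝ) :
    𝔼 σ, F σ * g (σ i) (σ j) = (𝔼 σ, F σ) * coinAvg g := by
  rw [expect_apply_eq_expect_avg j (G := fun σ c => F σ * g (σ i) c)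
    fun σ b => by simp [hj, update_of_ne hij]]
  have hi' := expect_apply_eq_expect_avg i (G := fun σ c => F σ * ((g c true + g c false) / 2))
    fun σ b => by simp [hi]
  rw [expect_mul, coinAvg]
  convert hi' using 2 <;> ring

end FreshCoordinates

section Probability

variable {Ω β : Type*} [MeasurableSpace Ω] {μ : Measure Ω} [IsProbabilityMeasure μ]
  [MeasurableSpace β] [MeasurableSingletonClass β]

lemma ae_eq_or_eq_of_measure_eq_half {X : Ω → β} (hX : Measurable X) {a b : β} (hab : a ≠ b)
    (ha : μ {ω | X ω = a} = 1 / 2) (hb : μ {ω | X ω = b} = 1 / 2) :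
    ∀ᵐ ω ∂μ, X ω = a ∨ X ω = b := by
  have hA : MeasurableSet {ω | X ω = a} := hX (measurableSet_singleton a)
  have hB : MeasurableSet {ω | X ω = b} := hX (measurableSet_singleton b)
  have hAB : MeasurableSet {ω | X ω = a ∨ X ω = b} := hA.union hB
  rw [ae_iff_measure_eq hAB.nullMeasurableSet, Set.ofPred_or,
    measure_union (Set.disjoint_left.2 fun ω h₁ h₂ => hab (h₁.symm.trans h₂)) hB, ha, hb,
    ENNReal.add_halves, measure_univ]

lemma measurable_decide_eq [DecidableEq β] {X : Ω → β} (hX : Measurable X) (c : β) :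
    Measurable fun ω => decide (X ω = c) :=
  measurable_to_bool <| by
    convert hX (measurableSet_singleton c)
    ext; simp

lemma measure_decide_eq [DecidableEq β] {X : Ω → β} (hX : Measurable X) {c : β}
    (hc : μ {ω | X ω = c} = 1 / 2) (b : Bool) : μ {ω | decide (X ω = c) = b} = 1 / 2 := by
  have hC : MeasurableSet {ω | X ω = c} := hX (measurableSet_singleton c)
  cases b
  · have : {ω | decide (X ω = c) = false} = {ω | X ω = c}ᶜ := by ext; simp
    rw [this, prob_compl_eq_one_sub hC, hc, one_div, ENNReal.one_sub_inv_two]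
  · simpa using hc

lemma measure_preimage_decide_eq [DecidableEq β] {κ : Type*} {X : κ → Ω → β} (hX : iIndepFun X μ)
    (hmeas : ∀ k, Measurable (X k)) {c : β} (hc : ∀ k, μ {ω | X k ω = c} = 1 / 2)
    (S : Finset κ) (σ : S → Bool) :
    μ ((fun ω (k : S) => decide (X k ω = c)) ⁻¹' {σ}) = (1 / 2) ^ #S := by
  have hY : iIndepFun (fun (k : S) ω => decide (X k ω = c)) μ :=
    (hX.precomp Subtype.val_injective).comp (fun _ x => decide (x = c)) fun _ =>
      measurable_decide_eq measurable_id c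
  have hset : (fun ω (k : S) => decide (X k ω = c)) ⁻¹' {σ} =
      ⋂ k ∈ (univ : Finset S), (fun ω => decide (X k ω = c)) ⁻¹' {σ k} := by
    ext ω; simp [funext_iff]
  rw [hset, hY.measure_inter_preimage_eq_mul univ fun _ _ => measurableSet_singleton _]
  simp only [Set.preimage, Set.mem_singleton_iff, measure_decide_eq (hmeas _) (hc _),
    prod_const, card_univ, Fintype.card_coe]

lemma integral_comp_eq_expect {α : Type*} [Fintype α] [MeasurableSpace α]
    [MeasurableSingletonClass α] {r : Ω → α} (hr : Measurable r)
    (hμ : ∀ a, μ (r ⁻¹' {a}) = (Fintype.card α : ℝ≥0∞)⁻¹) (f : α → ℝ) :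
    ∫ ω, f (r ω) ∂μ = 𝔼 a, f a := by
  rw [← integral_map hr.aemeasurable Integrable.of_finite.aestronglyMeasurable,
    integral_fintype Integrable.of_finite, Fintype.expect_eq_sum_div_card, sum_div]
  refine sum_congr rfl fun a _ => ?_
  rw [measureReal_def, Measure.map_apply hr (measurableSet_singleton a), hμ, smul_eq_mul,
    ENNReal.toReal_inv, ENNReal.toReal_natCast]
  ring

end Probability

lemma walkWeight_cons_cons (w : V → V → ℝ) (a b : V) (l : List V) :
    walkWeight w (a :: b :: l) = w a b + walkWeight w (b :: l) := by
  simp [walkWeight]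

lemma walkWeight_map_range (w : V → V → ℝ) (n : ℕ) (f : ℕ → V) :
    walkWeight w ((List.range (n + 1)).map f) = ∑ t ∈ range n, w (f t) (f (t + 1)) := by
  induction n generalizing f with
  | zero => simp [walkWeight]
  | succ n ih =>
    have hsucc (g : ℕ → V) (k : ℕ) :
        (List.range (k + 1)).map g = g 0 :: (List.range k).map (g ∘ Nat.succ) := by
      rw [List.range_succ_eq_map, List.map_cons, List.map_map]
    rw [hsucc f, hsucc (f ∘ Nat.succ), walkWeight_cons_cons, ← hsucc (f ∘ Nat.succ), ih,
      sum_range_succ']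
    simp only [comp_apply]
    ring

lemma walkWeight_nonneg {w : V → V → ℝ} (hw : ∀ u v, gridAdj u v → 0 ≤ w u v) {l : List V}
    (hl : l.IsChain gridAdj) : 0 ≤ walkWeight w l := by
  induction hl with
  | nil | singleton => simp [walkWeight]
  | cons_cons hr _ ih => rw [walkWeight_cons_cons]; exact add_nonneg (hw _ _ hr) ih

lemma monoDist_nonneg {w : V → V → ℝ} (hw : ∀ u v, gridAdj u v → 0 ≤ w u v) (u v : V) :
    0 ≤ monoDist w u v :=
  Real.sInf_nonneg fun _ ⟨_, hp, hc⟩ => hc ▸ walkWeight_nonneg hw hp.1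

lemma monoDist_le_walkWeight {w : V → V → ℝ} (hw : ∀ u v, gridAdj u v → 0 ≤ w u v) {u v : V}
    {l : List V} (hl : IsMonoWalk u v l) : monoDist w u v ≤ walkWeight w l :=
  csInf_le ⟨0, fun _ ⟨_, hp, hc⟩ => hc ▸ walkWeight_nonneg hw hp.1⟩ ⟨l, hl, rfl⟩

lemma sum_range_inv_three_pow_sub_le (n : ℕ) : ∑ t ∈ range n, (1 / 3 : ℝ) ^ (n - t) ≤ 1 / 2 := by
  calc ∑ t ∈ range n, (1 / 3 : ℝ) ^ (n - t)
      = 1 / 3 * ∑ j ∈ Ico 0 n, (1 / 3 : ℝ) ^ j := by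
        rw [← range_eq_Ico, mul_sum, ← sum_range_reflect]
        refine sum_congr rfl fun t ht => ?_
        rw [← pow_succ']
        congr 1
        have := mem_range.1 ht
        omega
    _ ≤ 1 / 3 * ((1 / 3) ^ 0 / (1 - 1 / 3)) := by
        gcongr
        exact geom_sum_Ico_le_of_lt_one (by norm_num) (by norm_num)
    _ = 1 / 2 := by norm_num

namespace GreedyWalk

def disp (p : V) : ℤ := p.1 - p.2

def step (p : V) (b : Bool) : V := if b then (p.1 + 1, p.2) else (p.1, p.2 + 1)

lemma edgeOf_eq (p : V) (b : Bool) : edgeOf (p, b) = (p, step p b) := by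
  cases b <;> rfl

lemma gridAdj_step (p : V) (b : Bool) : gridAdj p (step p b) := by
  cases b <;> simp [gridAdj, step]

lemma exists_edgeOf_of_gridAdj {u v : V} (h : gridAdj u v) :
    ∃ e, edgeOf e = (u, v) ∨ edgeOf e = (v, u) := by
  have : v = step u true ∨ u = step v true ∨ v = step u false ∨ u = step v false := by
    simp only [gridAdj, step, if_true, Bool.false_eq_true, if_false, Prod.ext_iff] at h ⊢
    rcases abs_cases (u.1 - v.1) with ⟨h₁, _⟩ | ⟨h₁, _⟩ <;>
      rcases abs_cases (u.2 - v.2) with ⟨h₂, _⟩ | ⟨h₂, _⟩ <;> omega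
  rcases this with h | h | h | h
  · exact ⟨(u, true), .inl (by rw [edgeOf_eq, h])⟩
  · exact ⟨(v, true), .inr (by rw [edgeOf_eq, h])⟩
  · exact ⟨(u, false), .inl (by rw [edgeOf_eq, h])⟩
  · exact ⟨(v, false), .inr (by rw [edgeOf_eq, h])⟩

lemma nonneg_of_gridAdj {w : V → V → ℝ} (hsymm : ∀ u v, w u v = w v u)
    (hw : ∀ e, 0 ≤ w (edgeOf e).1 (edgeOf e).2) (u v : V) (huv : gridAdj u v) : 0 ≤ w u v := by
  obtain ⟨e, he | he⟩ := exists_edgeOf_of_gridAdj huv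
  · simpa [he] using hw e
  · simpa [he, hsymm u v] using hw e

lemma disp_step (p : V) (b : Bool) :
    disp (step p b) = if b then disp p + 1 else disp p - 1 := by
  cases b <;> simp only [step, disp, Bool.false_eq_true, if_true, if_false] <;> ring

lemma step_fst_add_snd (p : V) (b : Bool) : (step p b).1 + (step p b).2 = p.1 + p.2 + 1 := by
  cases b <;> simp only [step, Bool.false_eq_true, if_true, if_false] <;> ring

lemma abs_disp_step (p : V) (b : Bool) :
    |disp (step p b)| = |disp p| + 1 ∨ |disp (step p b)| + 1 = |disp p| := by
  have h := disp_step p b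
  rcases abs_cases (disp p) with ⟨h₁, _⟩ | ⟨h₁, _⟩ <;>
    rcases abs_cases (disp (step p b)) with ⟨h₂, _⟩ | ⟨h₂, _⟩ <;> split_ifs at h <;> omega

-- `a` and `b` tell whether the east and the north edge leaving `p` has weight 2.
def dir (m : ℕ) (p : V) (a b : Bool) : Bool :=
  if p.1 = m then false
  else if p.2 = m then true
  else if a = b then decide (p.1 ≤ p.2)
  else !a

def next (m : ℕ) (p : V) (a b : Bool) : V := step p (dir m p a b)

def cost (m : ℕ) (p : V) (a b : Bool) : ℝ := if cond (dir m p a b) a b then 2 else 0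

def pos (m : ℕ) (w : V × Bool → Bool) : ℕ → V
  | 0 => (0, 0)
  | t + 1 => next m (pos m w t) (w (pos m w t, true)) (w (pos m w t, false))

def atStep {α : Type*} (m : ℕ) (w : V × Bool → Bool) (t : ℕ) (h : V → Bool → Bool → α) : α :=
  h (pos m w t) (w (pos m w t, true)) (w (pos m w t, false))

lemma pos_fst_add_snd (m : ℕ) (w : V × Bool → Bool) (t : ℕ) :
    (pos m w t).1 + (pos m w t).2 = t := by
  induction t with
  | zero => rfl
  | succ t ih => rw [pos, next, step_fst_add_snd, ih]; push_cast; rfl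

noncomputable def box (m : ℕ) : Finset V := Icc 0 (m : ℤ) ×ˢ Icc 0 (m : ℤ)

noncomputable def level (m t : ℕ) : Finset V := (box m).filter fun p => p.1 + p.2 = t

lemma mem_box {m : ℕ} {p : V} : p ∈ box m ↔ 0 ≤ p.1 ∧ p.1 ≤ m ∧ 0 ≤ p.2 ∧ p.2 ≤ m := by
  simp [box, and_assoc]

lemma mem_level {m t : ℕ} {p : V} : p ∈ level m t ↔ p ∈ box m ∧ p.1 + p.2 = t := by
  simp [level]

lemma next_mem_level {m t : ℕ} {p : V} (hp : p ∈ level m t) (ht : t < 2 * m) (a b : Bool) :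
    next m p a b ∈ level m (t + 1) := by
  rw [mem_level, mem_box] at hp ⊢
  obtain ⟨⟨h₁, h₂, h₃, h₄⟩, hs⟩ := hp
  have hE : dir m p a b = true → p.1 < m := by
    unfold dir; split_ifs <;> simp <;> omega
  have hN : dir m p a b = false → p.2 < m := by
    unfold dir; split_ifs <;> simp <;> omega
  rw [next, step_fst_add_snd, hs]
  unfold step
  cases hd : dir m p a b
  · have := hN hd; simp; omega
  · have := hE hd; simp; omega

lemma pos_mem_level (m : ℕ) (w : V × Bool → Bool) {t : ℕ} (ht : t ≤ 2 * m) :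
    pos m w t ∈ level m t := by
  induction t with
  | zero => simp [pos, mem_level, mem_box]
  | succ t ih => exact next_mem_level (ih (by omega)) (by omega) _ _

lemma pos_two_mul (m : ℕ) (w : V × Bool → Bool) : pos m w (2 * m) = ((m : ℤ), (m : ℤ)) := by
  have h := mem_level.1 (pos_mem_level m w le_rfl)
  rw [mem_box] at h
  push_cast at h
  ext <;> omega

lemma pos_congr (m : ℕ) {w w' : V × Bool → Bool} {t : ℕ}
    (h : ∀ e : V × Bool, e.1.1 + e.1.2 < t → w e = w' e) : pos m w t = pos m w' t := by
  induction t with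
  | zero => rfl
  | succ t ih =>
    have hp := ih fun e he => h e (by push_cast; omega)
    have hlev := pos_fst_add_snd m w t
    simp only [pos, ← hp, h (pos m w t, true) (by push_cast; omega),
      h (pos m w t, false) (by push_cast; omega)]

noncomputable def boxEdges (m : ℕ) : Finset (V × Bool) := box m ×ˢ univ

-- `σ e = true` means that the edge `e` has weight 2.
abbrev Config (m : ℕ) : Type := boxEdges m → Bool

noncomputable def extend {m : ℕ} (σ : Config m) (e : V × Bool) : Bool :=
  if h : e ∈ boxEdges m then σ ⟨e, h⟩ else false

lemma extend_of_mem {m : ℕ} (σ : Config m) {e : V × Bool} (h : e ∈ boxEdges m) :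
    extend σ e = σ ⟨e, h⟩ :=
  dif_pos h

lemma extend_update_of_ne {m : ℕ} (σ : Config m) {e : boxEdges m} (b : Bool) {e' : V × Bool}
    (h : e' ≠ e) : extend (update σ e b) e' = extend σ e' := by
  unfold extend
  split_ifs with h'
  · exact update_of_ne (fun hc => h (congrArg Subtype.val hc)) _ _
  · rfl

lemma pos_extend_update {m t : ℕ} (σ : Config m) (e : boxEdges m) (b : Bool)
    (ht : t ≤ e.1.1.1 + e.1.1.2) : pos m (extend (update σ e b)) t = pos m (extend σ) t :=
  pos_congr m fun e' he' => extend_update_of_ne σ b fun hc => by subst hc; omega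

lemma mk_mem_boxEdges {m t : ℕ} {p : V} (hp : p ∈ level m t) (b : Bool) : (p, b) ∈ boxEdges m :=
  mem_product.2 ⟨(mem_level.1 hp).1, mem_univ b⟩

-- The walk up to time `t` only reads edges below level `t`, so the two edges leaving its
-- position at time `t` are independent fair coins.
lemma expect_atStep {m t : ℕ} (ht : t ≤ 2 * m) (h : V → Bool → Bool → ℝ) :
    𝔼 σ : Config m, atStep m (extend σ) t h =
      ∑ p ∈ level m t,
        (𝔼 σ : Config m, if pos m (extend σ) t = p then 1 else 0) * coinAvg (h p) := by
  calc 𝔼 σ : Config m, atStep m (extend σ) t h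
      = 𝔼 σ : Config m, ∑ p ∈ level m t, (if pos m (extend σ) t = p then 1 else 0) *
          h p (extend σ (p, true)) (extend σ (p, false)) := by
        refine expect_congr rfl fun σ _ => ?_
        simp only [ite_mul, one_mul, zero_mul]
        rw [sum_ite_eq, if_pos (pos_mem_level m _ ht)]
        rfl
    _ = ∑ p ∈ level m t,
        (𝔼 σ : Config m, if pos m (extend σ) t = p then 1 else 0) * coinAvg (h p) := by
      rw [expect_sum_comm]
      refine sum_congr rfl fun p hp => ?_
      have hT := mk_mem_boxEdges hp true
      have hF := mk_mem_boxEdges hp false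
      have hlev : t ≤ p.1 + p.2 := (mem_level.1 hp).2.ge
      simp only [extend_of_mem _ hT, extend_of_mem _ hF]
      exact expect_mul_coins (i := (⟨(p, true), hT⟩ : boxEdges m)) (j := ⟨(p, false), hF⟩)
        (fun hc => Bool.noConfusion (congrArg (·.1.2) hc))
        (fun σ b => by rw [pos_extend_update σ _ b hlev])
        (fun σ b => by rw [pos_extend_update σ _ b hlev]) (h p)

lemma expect_atStep_le {m t : ℕ} (ht : t ≤ 2 * m) {h h' : V → Bool → Bool → ℝ}
    (hle : ∀ p ∈ level m t, coinAvg (h p) ≤ coinAvg (h' p)) :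
    𝔼 σ : Config m, atStep m (extend σ) t h ≤ 𝔼 σ : Config m, atStep m (extend σ) t h' := by
  rw [expect_atStep ht, expect_atStep ht]
  refine sum_le_sum fun p hp => mul_le_mul_of_nonneg_left (hle p hp) ?_
  exact expect_nonneg fun σ _ => by positivity

lemma abs_disp_lt_abs_disp_step_iff {p : V} (hp : disp p ≠ 0) (b : Bool) :
    |disp p| < |disp (step p b)| ↔ decide (0 < disp p) = b := by
  have h := disp_step p b
  rcases abs_cases (disp p) with ⟨h₁, _⟩ | ⟨h₁, _⟩ <;>
    rcases abs_cases (disp (step p b)) with ⟨h₂, _⟩ | ⟨h₂, _⟩ <;>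
    cases b <;> simp only [if_true, if_false, Bool.false_eq_true, decide_eq_true_iff,
      decide_eq_false_iff_not, h₁, h₂] at h ⊢ <;> omega

-- Off the diagonal the walk moves away from it only if the one light edge points away.
lemma coinAvg_away_le {m : ℕ} {p : V} (hp : p ∈ box m) (hd : disp p ≠ 0) :
    coinAvg (fun a b => if |disp p| < |disp (next m p a b)| then 1 else 0) ≤ 1 / 4 := by
  simp only [next, abs_disp_lt_abs_disp_step_iff hd]
  rw [mem_box] at hp
  have hle : p.1 ≤ p.2 ↔ ¬ 0 < disp p := by unfold disp; omega
  unfold coinAvg dir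
  by_cases h₁ : p.1 = m
  · have : 0 < disp p := by unfold disp at hd ⊢; omega
    simp [h₁, this]
  by_cases h₂ : p.2 = m
  · have : ¬ 0 < disp p := by unfold disp at hd ⊢; omega
    simp [h₁, h₂, this]
  by_cases h : 0 < disp p <;> simp [h₁, h₂, h, hle]

lemma coinAvg_far_le {m : ℕ} {p : V} (hp : p ∈ box m) {k : ℤ} (hk : 0 ≤ k) :
    coinAvg (fun a b => if k + 2 ≤ |disp (next m p a b)| then 1 else 0) ≤
      3 / 4 * (if k + 3 ≤ |disp p| then 1 else 0) + 1 / 4 * (if k + 1 ≤ |disp p| then 1 else 0) := by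
  have hstep a b := abs_disp_step p (dir m p a b)
  by_cases h₃ : k + 3 ≤ |disp p|
  · rw [if_pos h₃, if_pos (by omega)]
    calc _ ≤ coinAvg fun _ _ => 1 := coinAvg_mono fun a b => by split_ifs <;> norm_num
      _ = _ := by norm_num
  by_cases h₁ : k + 1 ≤ |disp p|
  · rw [if_neg h₃, if_pos h₁]
    have hd : disp p ≠ 0 := fun h => by rw [h, abs_zero] at h₁; omega
    calc _ ≤ coinAvg fun a b => if |disp p| < |disp (next m p a b)| then 1 else 0 :=
          coinAvg_mono fun a b => by
            have := hstep a b
            unfold next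
            split_ifs <;> first | omega | norm_num
      _ ≤ 1 / 4 := coinAvg_away_le hp hd
      _ = _ := by ring
  · rw [if_neg h₃, if_neg h₁]
    calc _ = coinAvg fun _ _ => 0 :=
          congrArg coinAvg (funext₂ fun a b => if_neg (by have := hstep a b; unfold next; omega))
      _ ≤ _ := by simp

lemma coinAvg_cost_le {m t : ℕ} {p : V} (hp : p ∈ level m t) :
    coinAvg (cost m p) ≤ 1 / 2 + 1 / 2 * (if (2 * m - t : ℤ) ≤ |disp p| then 1 else 0) := by
  rw [mem_level, mem_box] at hp
  by_cases h₁ : p.1 = m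
  · have : (2 * m - t : ℤ) ≤ |disp p| := by
      unfold disp; rw [abs_of_nonneg (by omega)]; omega
    simp [coinAvg, cost, dir, h₁, this]; norm_num
  by_cases h₂ : p.2 = m
  · have : (2 * m - t : ℤ) ≤ |disp p| := by
      unfold disp; rw [abs_of_nonpos (by omega)]; omega
    simp [coinAvg, cost, dir, h₁, h₂, this]; norm_num
  have hfree : coinAvg (cost m p) = 1 / 2 := by
    simp [coinAvg, cost, dir, h₁, h₂]; norm_num
  have : (0 : ℝ) ≤ if (2 * m - t : ℤ) ≤ |disp p| then 1 else 0 := by positivity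
  linarith

noncomputable def tail (m t : ℕ) (d : ℤ) : ℝ :=
  𝔼 σ : Config m, if d ≤ |disp (pos m (extend σ) t)| then 1 else 0

lemma tail_le_one (m t : ℕ) (d : ℤ) : tail m t d ≤ 1 :=
  expect_le univ_nonempty fun σ _ => by split_ifs <;> norm_num

lemma tail_zero (m : ℕ) {d : ℤ} (hd : 1 ≤ d) : tail m 0 d = 0 := by
  simp [tail, pos, disp]
  omega

lemma tail_succ_le {m t : ℕ} (ht : t < 2 * m) {k : ℤ} (hk : 0 ≤ k) :
    tail m (t + 1) (k + 2) ≤ 3 / 4 * tail m t (k + 3) + 1 / 4 * tail m t (k + 1) :=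
  calc tail m (t + 1) (k + 2)
      = 𝔼 σ : Config m, atStep m (extend σ) t fun p a b =>
          if k + 2 ≤ |disp (next m p a b)| then 1 else 0 := rfl
    _ ≤ 𝔼 σ : Config m, atStep m (extend σ) t fun p _ _ =>
          3 / 4 * (if k + 3 ≤ |disp p| then 1 else 0) +
            1 / 4 * (if k + 1 ≤ |disp p| then 1 else 0) := by
        refine expect_atStep_le ht.le fun p hp => ?_
        simpa using coinAvg_far_le (mem_level.1 hp).1 hk
    _ = _ := by simp only [atStep, tail, expect_add_distrib, mul_expect]

lemma tail_le {m t : ℕ} (ht : t ≤ 2 * m) {d : ℕ} (hd : 1 ≤ d) :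
    tail m t d ≤ 3 * (1 / 3) ^ d := by
  induction t generalizing d with
  | zero => rw [tail_zero m (by omega)]; positivity
  | succ t ih =>
    obtain ⟨k, rfl⟩ | rfl : (∃ k, d = k + 2) ∨ d = 1 := by
      rcases Nat.exists_eq_add_of_le' hd with ⟨k, rfl⟩; cases k <;> simp
    · have h₃ := ih (by omega) (d := k + 3) (by omega)
      have h₁ := ih (by omega) (d := k + 1) (by omega)
      push_cast at h₃ h₁ ⊢
      calc tail m (t + 1) (k + 2)
          ≤ 3 / 4 * tail m t (k + 3) + 1 / 4 * tail m t (k + 1) :=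
            tail_succ_le (by omega) (by positivity)
        _ ≤ 3 / 4 * (3 * (1 / 3) ^ (k + 3)) + 1 / 4 * (3 * (1 / 3) ^ (k + 1)) := by gcongr
        _ = 3 * (1 / 3) ^ (k + 2) := by ring
    · simpa using tail_le_one m (t + 1) 1

lemma expect_cost_le {m t : ℕ} (ht : t < 2 * m) :
    𝔼 σ : Config m, atStep m (extend σ) t (cost m) ≤ 1 / 2 + 3 / 2 * (1 / 3) ^ (2 * m - t) :=
  calc 𝔼 σ : Config m, atStep m (extend σ) t (cost m)
      ≤ 𝔼 σ : Config m, atStep m (extend σ) t fun p _ _ =>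
          1 / 2 + 1 / 2 * (if (2 * m - t : ℤ) ≤ |disp p| then 1 else 0) := by
        refine expect_atStep_le ht.le fun p hp => ?_
        simpa using coinAvg_cost_le hp
    _ = 1 / 2 + 1 / 2 * tail m t ((2 * m - t : ℕ) : ℤ) := by
        rw [Nat.cast_sub ht.le]
        simp only [atStep, tail, expect_add_distrib, mul_expect, Fintype.expect_const]
        push_cast
        rfl
    _ ≤ 1 / 2 + 3 / 2 * (1 / 3) ^ (2 * m - t) := by
        have := tail_le ht.le (d := 2 * m - t) (by omega)
        linarith

noncomputable def walkCost (m : ℕ) (w : V × Bool → Bool) : ℝ :=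
  ∑ t ∈ range (2 * m), atStep m w t (cost m)

lemma expect_walkCost_le (m : ℕ) : 𝔼 σ : Config m, walkCost m (extend σ) ≤ m + 3 / 4 :=
  calc 𝔼 σ : Config m, walkCost m (extend σ)
      = ∑ t ∈ range (2 * m), 𝔼 σ : Config m, atStep m (extend σ) t (cost m) :=
        expect_sum_comm _ _ _
    _ ≤ ∑ t ∈ range (2 * m), (1 / 2 + 3 / 2 * (1 / 3 : ℝ) ^ (2 * m - t)) :=
        sum_le_sum fun t ht => expect_cost_le (mem_range.1 ht)
    _ = m + 3 / 2 * ∑ t ∈ range (2 * m), (1 / 3 : ℝ) ^ (2 * m - t) := by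
        rw [sum_add_distrib, ← mul_sum, sum_const, card_range, nsmul_eq_mul]
        push_cast
        ring
    _ ≤ m + 3 / 4 := by linarith [sum_range_inv_three_pow_sub_le (2 * m)]

def walkList (m : ℕ) (w : V × Bool → Bool) : List V := (List.range (2 * m + 1)).map (pos m w)

lemma isMonoWalk_walkList (m : ℕ) (w : V × Bool → Bool) :
    IsMonoWalk (0, 0) (m, m) (walkList m w) := by
  refine ⟨?_, ?_, ?_, ?_⟩
  · change List.IsChain gridAdj _
    rw [walkList, List.isChain_map, List.isChain_range_succ]
    exact fun t _ => gridAdj_step _ _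
  · rw [walkList, List.range_succ_eq_map, List.map_cons]
    rfl
  · rw [walkList, List.range_succ, List.map_append, List.map_singleton, List.getLast?_concat,
      pos_two_mul]
  · simp [walkList]
    omega

lemma walkWeight_walkList {m : ℕ} {W : V → V → ℝ} {w : V × Bool → Bool}
    (hW : ∀ e ∈ boxEdges m, W (edgeOf e).1 (edgeOf e).2 = if w e then 2 else 0) :
    walkWeight W (walkList m w) = walkCost m w := by
  rw [walkList, walkWeight_map_range, walkCost]
  refine sum_congr rfl fun t ht => ?_
  set p := pos m w t
  have hp : p ∈ level m t := pos_mem_level m w (mem_range.1 ht).le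
  have hd := hW _ (mk_mem_boxEdges hp (dir m p (w (p, true)) (w (p, false))))
  rw [edgeOf_eq] at hd
  change W p (next m p _ _) = cost m p _ _
  rw [next, hd, cost]
  cases dir m p (w (p, true)) (w (p, false)) <;> rfl

noncomputable def heavyEdges (m : ℕ) (w : V → V → ℝ) : Config m :=
  fun e => decide (w (edgeOf e).1 (edgeOf e).2 = 2)

lemma monoDist_le_walkCost {w : V → V → ℝ} (hnonneg : ∀ u v, gridAdj u v → 0 ≤ w u v)
    (hw : ∀ e, w (edgeOf e).1 (edgeOf e).2 = 0 ∨ w (edgeOf e).1 (edgeOf e).2 = 2) (m : ℕ) :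
    monoDist w (0, 0) (m, m) ≤ walkCost m (extend (heavyEdges m w)) := by
  refine (monoDist_le_walkWeight hnonneg (isMonoWalk_walkList m _)).trans_eq
    (walkWeight_walkList fun e he => ?_)
  rw [extend_of_mem _ he]
  rcases hw e with h | h <;> simp [heavyEdges, h]

end GreedyWalk

open GreedyWalk

/-- If each edge of the grid graph independently receives weight `0`
or `2` with probability `1/2` each, then there is a constant `C > 0` such that for
every `m ≥ 1`, `E[monodist_w((0,0),(m,m))] ≤ m + C·√m`. -/
theorem stmt10 (Ω : Type) [MeasurableSpace Ω] (μ : Measure Ω) [IsProbabilityMeasure μ]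
    (W : Ω → V → V → ℝ)
    (hsymm : ∀ ω u v, W ω u v = W ω v u)
    (hmeas : ∀ e : V × Bool, Measurable fun ω => W ω (edgeOf e).1 (edgeOf e).2)
    (hindep : iIndepFun
      (fun (e : V × Bool) ω => W ω (edgeOf e).1 (edgeOf e).2) μ)
    (hlaw : ∀ e : V × Bool,
      μ {ω | W ω (edgeOf e).1 (edgeOf e).2 = 0} = 1 / 2 ∧
      μ {ω | W ω (edgeOf e).1 (edgeOf e).2 = 2} = 1 / 2) :
    ∃ C : ℝ, 0 < C ∧
      ∀ m : ℕ, 1 ≤ m →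
        (∫ ω, monoDist (W ω) (0, 0) ((m : ℤ), (m : ℤ)) ∂μ) ≤
          (m : ℝ) + C * Real.sqrt (m : ℝ) := by
  refine ⟨1, one_pos, fun m hm => ?_⟩
  let r (ω : Ω) : Config m := heavyEdges m (W ω)
  have hr : Measurable r := measurable_pi_lambda _ fun e => measurable_decide_eq (hmeas e) 2
  have hr_fiber (σ : Config m) : μ (r ⁻¹' {σ}) = (Fintype.card (Config m) : ℝ≥0∞)⁻¹ := by
    refine (measure_preimage_decide_eq hindep hmeas (fun e => (hlaw e).2) _ σ).trans ?_
    rw [Fintype.card_fun, Fintype.card_bool, Fintype.card_coe, Nat.cast_pow, ENNReal.inv_pow,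
      one_div, Nat.cast_two]
  have hgood : ∀ᵐ ω ∂μ, ∀ e,
      W ω (edgeOf e).1 (edgeOf e).2 = 0 ∨ W ω (edgeOf e).1 (edgeOf e).2 = 2 :=
    ae_all_iff.2 fun e =>
      ae_eq_or_eq_of_measure_eq_half (hmeas e) (by norm_num) (hlaw e).1 (hlaw e).2
  have hnonneg : ∀ᵐ ω ∂μ, ∀ u v, gridAdj u v → 0 ≤ W ω u v := hgood.mono fun ω h =>
    nonneg_of_gridAdj (hsymm ω) fun e => by rcases h e with h | h <;> simp [h]
  calc ∫ ω, monoDist (W ω) (0, 0) (m, m) ∂μ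
      ≤ ∫ ω, walkCost m (extend (r ω)) ∂μ :=
        integral_mono_of_nonneg (hnonneg.mono fun ω h => monoDist_nonneg h _ _)
          ((Integrable.of_finite (f := fun σ : Config m => walkCost m (extend σ))).comp_measurable
            hr)
          ((hnonneg.and hgood).mono fun ω h => monoDist_le_walkCost h.1 h.2 m)
    _ = 𝔼 σ : Config m, walkCost m (extend σ) :=
        integral_comp_eq_expect hr hr_fiber fun σ => walkCost m (extend σ)
    _ ≤ m + 3 / 4 := expect_walkCost_le m
    _ ≤ m + 1 * Real.sqrt m := by
      have : (1 : ℝ) ≤ Real.sqrt m := Real.one_le_sqrt.2 (by exact_mod_cast hm)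
      linarith
end

section
/- For an integer n ≥ 1 define the sequence k₁ = ⌊n^(1/5)⌋ and k_{i+1} = ⌊√(k_i)⌋, and let m be the minimal index with k_m < 100. Then for every real number d with 100⁹ < d ≤ √2·n, there exists an index i with 1 ≤ i ≤ m such that d^(1/9) − 1 ≤ k_i ≤ d^(2/9). -/
/-- For `n ≥ 1`, let `k₁ = ⌊n^(1/5)⌋`, `k_{i+1} = ⌊√(k_i)⌋`, and let
`m` be the minimal index with `k_m < 100`. Then for every real `d` with
`100⁹ < d ≤ √2·n`, there is an index `1 ≤ i ≤ m` with
`d^(1/9) - 1 ≤ k_i ≤ d^(2/9)`. -/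
theorem stmt12 (n : ℕ) (hn : 1 ≤ n) (k : ℕ → ℕ)
    (hk1 : k 1 = ⌊(n : ℝ) ^ ((1 : ℝ) / 5)⌋₊)
    (hrec : ∀ i, 1 ≤ i → k (i + 1) = Nat.sqrt (k i))
    (m : ℕ) (hm1 : 1 ≤ m) (hm : k m < 100)
    (hmin : ∀ j, 1 ≤ j → j < m → 100 ≤ k j)
    (d : ℝ) (hd1 : (100 : ℝ) ^ 9 < d) (hd2 : d ≤ Real.sqrt 2 * (n : ℝ)) :
    ∃ i, 1 ≤ i ∧ i ≤ m ∧
      d ^ ((1 : ℝ) / 9) - 1 ≤ (k i : ℝ) ∧ (k i : ℝ) ≤ d ^ ((2 : ℝ) / 9) := by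
  classical
  set a : ℝ := d ^ ((1 : ℝ) / 9) with ha_def
  have hd0 : (0 : ℝ) < d := lt_trans (by positivity) hd1
  have ha100 : (100 : ℝ) < a := by
    have h : ((100 : ℝ) ^ 9) ^ ((1 : ℝ) / 9) < d ^ ((1 : ℝ) / 9) :=
      Real.rpow_lt_rpow (by positivity) hd1 (by norm_num)
    calc (100 : ℝ) = ((100 : ℝ) ^ 9) ^ ((1 : ℝ) / 9) := by
          rw [← Real.rpow_natCast (100 : ℝ) 9, ← Real.rpow_mul (by norm_num)]
          norm_num
      _ < a := h
  have ha0 : (0 : ℝ) < a := lt_trans (by norm_num) ha100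
  have hsq : d ^ ((2 : ℝ) / 9) = a ^ 2 := by
    rw [ha_def, ← Real.rpow_natCast (d ^ ((1 : ℝ) / 9)) 2, ← Real.rpow_mul hd0.le]
    norm_num
  -- √2 ≤ 2
  have hs2 : Real.sqrt 2 ≤ 2 := by
    nlinarith [Real.sq_sqrt (show (0:ℝ) ≤ 2 by norm_num), Real.sqrt_nonneg 2]
  have hs2' : (0:ℝ) ≤ Real.sqrt 2 := Real.sqrt_nonneg 2
  -- n ≥ 2 (indeed much larger)
  have hn2 : (2 : ℝ) ≤ (n : ℝ) := by nlinarith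
  have hn0 : (0 : ℝ) < (n : ℝ) := by linarith
  -- √2 ≤ n^{4/5}
  have h45 : Real.sqrt 2 ≤ (n : ℝ) ^ ((4 : ℝ) / 5) := by
    have h1 : Real.sqrt 2 = (2 : ℝ) ^ ((1 : ℝ) / 2) := Real.sqrt_eq_rpow 2
    have h2 : (2 : ℝ) ^ ((1 : ℝ) / 2) ≤ (2 : ℝ) ^ ((4 : ℝ) / 5) :=
      Real.rpow_le_rpow_of_exponent_le (by norm_num) (by norm_num)
    have h3 : (2 : ℝ) ^ ((4 : ℝ) / 5) ≤ (n : ℝ) ^ ((4 : ℝ) / 5) :=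
      Real.rpow_le_rpow (by norm_num) hn2 (by norm_num)
    linarith [h1 ▸ le_trans h2 h3]
  -- d ≤ n^{9/5}
  have hdn : d ≤ (n : ℝ) ^ ((9 : ℝ) / 5) := by
    have : Real.sqrt 2 * (n : ℝ) ≤ (n : ℝ) ^ ((4 : ℝ) / 5) * (n : ℝ) :=
      mul_le_mul_of_nonneg_right h45 hn0.le
    have heq : (n : ℝ) ^ ((9 : ℝ) / 5) = (n : ℝ) ^ ((4 : ℝ) / 5) * (n : ℝ) := by
      rw [show (9 : ℝ) / 5 = 4 / 5 + 1 by norm_num, Real.rpow_add hn0, Real.rpow_one]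
    linarith
  -- a ≤ n^{1/5}
  have han : a ≤ (n : ℝ) ^ ((1 : ℝ) / 5) := by
    have h1 : d ^ ((1 : ℝ) / 9) ≤ ((n : ℝ) ^ ((9 : ℝ) / 5)) ^ ((1 : ℝ) / 9) :=
      Real.rpow_le_rpow hd0.le hdn (by norm_num)
    have h2 : ((n : ℝ) ^ ((9 : ℝ) / 5)) ^ ((1 : ℝ) / 9) = (n : ℝ) ^ ((1 : ℝ) / 5) := by
      rw [← Real.rpow_mul hn0.le]; norm_num
    rw [ha_def]; linarith [h2 ▸ h1]
  -- lower bound for k 1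
  have hk1lb : a - 1 ≤ (k 1 : ℝ) := by
    have h := Nat.sub_one_lt_floor ((n : ℝ) ^ ((1 : ℝ) / 5))
    rw [hk1]
    linarith
  -- the predicate and the least index
  have hQm : 1 ≤ m ∧ (k m : ℝ) ≤ a ^ 2 := by
    refine ⟨hm1, ?_⟩
    have : (k m : ℝ) < 100 := by exact_mod_cast hm
    nlinarith
  have hex : ∃ i, 1 ≤ i ∧ (k i : ℝ) ≤ a ^ 2 := ⟨m, hQm⟩
  set i := Nat.find hex with hi_def
  have hi := Nat.find_spec hex
  have him : i ≤ m := Nat.find_le hQm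
  refine ⟨i, hi.1, him, ?_, by rw [hsq]; exact hi.2⟩
  rcases eq_or_lt_of_le hi.1 with h1 | h1
  · have : i = 1 := h1.symm
    rw [this]; exact hk1lb
  · -- i ≥ 2, let j = i - 1
    obtain ⟨j, hj⟩ : ∃ j, i = j + 1 := ⟨i - 1, by omega⟩
    have hj1 : 1 ≤ j := by omega
    have hjlt : j < i := by omega
    have hnQ := Nat.find_min hex hjlt
    push_neg at hnQ
    have hjgt : a ^ 2 < (k j : ℝ) := hnQ hj1
    have hki : k i = Nat.sqrt (k j) := by rw [hj]; exact hrec j hj1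
    have hsqrt_gt : a < Real.sqrt (k j) := by
      have := Real.sqrt_lt_sqrt (by positivity : (0:ℝ) ≤ a ^ 2) hjgt
      rwa [Real.sqrt_sq ha0.le] at this
    have hsqrt_lt : Real.sqrt (k j) < (Nat.sqrt (k j) : ℝ) + 1 := by
      rw [Real.sqrt_lt' (by positivity)]
      have h := Nat.lt_succ_sqrt (k j)
      have : (k j : ℝ) < ((Nat.sqrt (k j) : ℝ) + 1) * ((Nat.sqrt (k j) : ℝ) + 1) := by
        exact_mod_cast h
      nlinarith
    rw [hki]
    linarith
end
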